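/- arXiv:math/0402091 — 10 statements merged into one kernel-verified Lean document; each statement's English description precedes it below -/
import Mathlib

section
/- Let n be a positive integer and let s_1, ..., s_n be real numbers with s_j ≥ 1 for 1 ≤ j ≤ n. Then the nested sum ∑_{k_1 > k_2 > ... > k_n > 0} ∏_{j=1}^n k_j^{-s_j}, taken over all tuples of positive integers k_1, ..., k_n satisfying the indicated strict inequalities, converges (i.e., the family of terms is summable) if and only if s_1 > 1. -/
/-!
Divergence: fixing the tail `(k₁, …, kₙ₋₁) = (n - 1, …, 1)` leaves the series
`∑_{k₀ > n - 1} k₀ ^ (-s₀)`, which converges only if `s₀ > 1`.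

Convergence: put `δ = (s₀ - 1) / n`. Since `k₀` is the largest entry and every `kⱼ ≥ 1`,
`k₀ ^ (-s₀) ≤ k₀ ^ (-1) ∏ⱼ kⱼ ^ (-δ)` and `kⱼ ^ (-sⱼ) ≤ kⱼ ^ (-1)`, so each term is at most
`∏ⱼ kⱼ ^ (-(1 + δ))`, whose sum over all of `ℕⁿ` is `ζ(1 + δ)ⁿ < ∞`.
-/

open Real Finset

theorem summable_prod_comp_of_nonneg {g : ℕ → ℝ} (hg : Summable g) (hg0 : 0 ≤ g) :
    ∀ n : ℕ, Summable fun k : Fin n → ℕ => ∏ j, g (k j)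
  | 0 => Summable.of_finite
  | n + 1 => by
    have hmul : Summable fun p : ℕ × (Fin n → ℕ) => g p.1 * ∏ j, g (p.2 j) :=
      Summable.mul_of_nonneg (g := fun k : Fin n → ℕ => ∏ j, g (k j)) hg
        (summable_prod_comp_of_nonneg hg hg0 n) hg0 fun k => prod_nonneg fun j _ => hg0 (k j)
    rw [← (Fin.consEquiv fun _ : Fin (n + 1) => ℕ).summable_iff]
    refine hmul.congr fun p => ?_
    simp [Fin.consEquiv, Fin.prod_univ_succ]

theorem prod_rpow_neg_le_prod_rpow_neg {ι : Type*} [Fintype ι] {x s : ι → ℝ} (i₀ : ι)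
    {δ : ℝ} (hx : ∀ j, 1 ≤ x j) (hmax : ∀ j, x j ≤ x i₀) (hs : ∀ j, 1 ≤ s j) (hδ : 0 ≤ δ)
    (hδs : Fintype.card ι * δ ≤ s i₀ - 1) :
    ∏ j, x j ^ (-s j) ≤ ∏ j, x j ^ (-(1 + δ)) := by
  classical
  have hpos : ∀ j, 0 < x j := fun j => one_pos.trans_le (hx j)
  have excess : ∏ j, x j ^ (-(s j - 1)) ≤ x i₀ ^ (-(s i₀ - 1)) := by
    rw [← mul_prod_erase univ _ (mem_univ i₀)]
    refine mul_le_of_le_one_right (rpow_nonneg (hpos i₀).le _) ?_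
    exact prod_le_one (fun j _ => rpow_nonneg (hpos j).le _)
      fun j _ => rpow_le_one_of_one_le_of_nonpos (hx j) (by linarith [hs j])
  have gain : x i₀ ^ (-(s i₀ - 1)) ≤ ∏ j, x j ^ (-δ) :=
    calc x i₀ ^ (-(s i₀ - 1))
        ≤ x i₀ ^ (-(Fintype.card ι * δ)) :=
          rpow_le_rpow_of_exponent_le (hx i₀) (by linarith)
      _ = ∏ _j, x i₀ ^ (-δ) := by
        rw [prod_const, card_univ, ← rpow_natCast, ← rpow_mul (hpos i₀).le]
        ring_nf
      _ ≤ ∏ j, x j ^ (-δ) :=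
        prod_le_prod (fun _ _ => rpow_nonneg (hpos i₀).le _)
          fun j _ => rpow_le_rpow_of_nonpos (hpos j) (hmax j) (by linarith)
  have split : ∀ (j : ι) (a : ℝ), x j ^ (-(1 + a)) = x j ^ (-1 : ℝ) * x j ^ (-a) := by
    intro j a
    rw [← rpow_add (hpos j)]
    ring_nf
  calc ∏ j, x j ^ (-s j)
      = (∏ j, x j ^ (-1 : ℝ)) * ∏ j, x j ^ (-(s j - 1)) := by
        rw [← prod_mul_distrib]
        refine prod_congr rfl fun j _ => ?_
        rw [← split]
        ring_nf
    _ ≤ (∏ j, x j ^ (-1 : ℝ)) * ∏ j, x j ^ (-δ) :=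
        mul_le_mul_of_nonneg_left (excess.trans gain)
          (prod_nonneg fun j _ => rpow_nonneg (hpos j).le _)
    _ = ∏ j, x j ^ (-(1 + δ)) := by
        rw [← prod_mul_distrib]
        exact prod_congr rfl fun j _ => (split j δ).symm

theorem summable_prod_rpow_neg_of_one_lt {n : ℕ} {s : Fin (n + 1) → ℝ} (hs : ∀ j, 1 ≤ s j)
    (h0 : 1 < s 0) :
    Summable fun k : {k : Fin (n + 1) → ℕ // StrictAnti k ∧ ∀ i, 0 < k i} =>
      ∏ j, (k.1 j : ℝ) ^ (-s j) := by
  set δ : ℝ := (s 0 - 1) / (n + 1)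
  have hδ : 0 < δ := by positivity
  have hdom : Summable fun k : Fin (n + 1) → ℕ => ∏ j, (k j : ℝ) ^ (-(1 + δ)) :=
    summable_prod_comp_of_nonneg (summable_nat_rpow.mpr (by linarith))
      (fun m => rpow_nonneg m.cast_nonneg _) (n + 1)
  refine (hdom.subtype _).of_nonneg_of_le
    (fun k => prod_nonneg fun j _ => rpow_nonneg (k.1 j).cast_nonneg _) fun ⟨k, hanti, hk⟩ => ?_
  refine prod_rpow_neg_le_prod_rpow_neg 0 (fun j => by exact_mod_cast hk j)
    (fun j => by exact_mod_cast hanti.antitone (Fin.zero_le j)) hs hδ.le ?_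
  rw [Fintype.card_fin, Nat.cast_add_one, mul_div_cancel₀ _ (by positivity)]

theorem one_lt_of_summable_prod_rpow_neg {n : ℕ} {s : Fin (n + 1) → ℝ}
    (h : Summable fun k : {k : Fin (n + 1) → ℕ // StrictAnti k ∧ ∀ i, 0 < k i} =>
      ∏ j, (k.1 j : ℝ) ^ (-s j)) :
    1 < s 0 := by
  -- the tuple `(m + n + 1, n, n - 1, …, 1)`
  let tuple (m : ℕ) (j : Fin (n + 1)) : ℕ := n + 1 - j + if j = 0 then m else 0
  have htuple (m : ℕ) : StrictAnti (tuple m) ∧ ∀ i, 0 < tuple m i := by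
    refine ⟨fun i j hij => ?_, fun i => ?_⟩
    · have hj : j ≠ 0 := (Fin.zero_le i).trans_lt hij |>.ne'
      have : (i : ℕ) < j := hij
      simp only [tuple, if_neg hj]
      omega
    · have : (i : ℕ) < n + 1 := i.2
      simp only [tuple]
      omega
  have hinj : Function.Injective fun m =>
      (⟨tuple m, htuple m⟩ : {k : Fin (n + 1) → ℕ // StrictAnti k ∧ ∀ i, 0 < k i}) := by
    intro a b hab
    simpa [tuple] using congrFun (congrArg Subtype.val hab) 0
  set c := ∏ j : Fin n, ((n - j : ℕ) : ℝ) ^ (-s j.succ)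
  have hc : c ≠ 0 := prod_ne_zero_iff.mpr fun j _ =>
    (rpow_pos_of_pos (Nat.cast_pos.mpr (by omega)) _).ne'
  have hterm (m : ℕ) :
      ∏ j, (tuple m j : ℝ) ^ (-s j) = ((m + (n + 1) : ℕ) : ℝ) ^ (-s 0) * c := by
    rw [Fin.prod_univ_succ]
    congr 1
    · have : tuple m 0 = m + (n + 1) := by simp [tuple]; omega
      rw [this]
    · refine prod_congr rfl fun j _ => ?_
      have : tuple m j.succ = n - j := by simp [tuple, Fin.succ_ne_zero]
      rw [this]
  have hsum : Summable fun m : ℕ => ((m + (n + 1) : ℕ) : ℝ) ^ (-s 0) :=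
    (summable_mul_right_iff hc).mp ((h.comp_injective hinj).congr hterm)
  have hpow : Summable fun m : ℕ => (m : ℝ) ^ (-s 0) := (summable_nat_add_iff (n + 1)).mp hsum
  linarith [summable_nat_rpow.mp hpow]

/-- The nested sum defining the multiple zeta function, over tuples of positive
integers `k 0 > k 1 > ⋯ > k (n-1) > 0`, is summable iff the first exponent exceeds `1`. -/
theorem stmt0 (n : ℕ) (hn : 0 < n) (s : Fin n → ℝ) (hs : ∀ j, 1 ≤ s j) :
    Summable (fun k : {k : Fin n → ℕ // (∀ i j : Fin n, i < j → k j < k i) ∧ ∀ i, 0 < k i} =>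
      ∏ j, (k.1 j : ℝ) ^ (-(s j))) ↔ 1 < s ⟨0, hn⟩ := by
  obtain ⟨n, rfl⟩ : ∃ m, n = m + 1 := ⟨n - 1, by omega⟩
  exact ⟨one_lt_of_summable_prod_rpow_neg, summable_prod_rpow_neg_of_one_lt hs⟩
end

section
/- For all real numbers x_1, x_2, x_3 each exceeding 1, 2/(x_1 x_2 x_3 − 1) − 1/((x_2 − 1)(x_1 x_3 − 1)) − 1/((x_3 − 1)(x_1 x_2 − 1)) + 1/((x_1 x_2 − 1)(x_1 x_2 x_3 − 1)) + 1/((x_2 − 1)(x_1 x_2 x_3 − 1)) + 1/((x_1 x_3 − 1)(x_1 x_2 x_3 − 1)) + 1/((x_3 − 1)(x_1 x_2 x_3 − 1)) = 0. -/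
/-! The two terms with the factor `x₁ x₂ - 1`, together with `1 / ((x₃ - 1)(x₁ x₂ x₃ - 1))`,
collapse by partial fractions to `-1 / (x₁ x₂ x₃ - 1)`; symmetrically for `x₁ x₃ - 1` and `x₂ - 1`.
The two groups cancel the term `2 / (x₁ x₂ x₃ - 1)`. -/

theorem one_div_sub_one_mul_sum_eq_neg_one_div {K : Type*} [Field K] {u c : K}
    (hu : u - 1 ≠ 0) (hc : c - 1 ≠ 0) (huc : u * c - 1 ≠ 0) :
    1 / ((u - 1) * (u * c - 1)) - 1 / ((c - 1) * (u - 1)) + 1 / ((c - 1) * (u * c - 1))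
      = -1 / (u * c - 1) := by
  field_simp
  ring

theorem stmt4 (x₁ x₂ x₃ : ℝ) (h₁ : 1 < x₁) (h₂ : 1 < x₂) (h₃ : 1 < x₃) :
    2 / (x₁ * x₂ * x₃ - 1) - 1 / ((x₂ - 1) * (x₁ * x₃ - 1))
      - 1 / ((x₃ - 1) * (x₁ * x₂ - 1)) + 1 / ((x₁ * x₂ - 1) * (x₁ * x₂ * x₃ - 1))
      + 1 / ((x₂ - 1) * (x₁ * x₂ * x₃ - 1)) + 1 / ((x₁ * x₃ - 1) * (x₁ * x₂ * x₃ - 1))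
      + 1 / ((x₃ - 1) * (x₁ * x₂ * x₃ - 1)) = 0 := by
  have h₁₂ : 1 < x₁ * x₂ := by nlinarith
  have h₁₃ : 1 < x₁ * x₃ := by nlinarith
  have h₁₂₃ : 1 < x₁ * x₂ * x₃ := by nlinarith
  have group₃ := one_div_sub_one_mul_sum_eq_neg_one_div
    (sub_ne_zero.2 h₁₂.ne') (sub_ne_zero.2 h₃.ne') (sub_ne_zero.2 h₁₂₃.ne')
  have group₂ := one_div_sub_one_mul_sum_eq_neg_one_div
    (sub_ne_zero.2 h₁₃.ne') (sub_ne_zero.2 h₂.ne')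
    (mul_right_comm x₁ x₂ x₃ ▸ sub_ne_zero.2 h₁₂₃.ne')
  linear_combination group₃ + group₂
end

section
/- For all real numbers s_1 > 1 and s_2 > 1, ζ(s_1, s_2) = ∫_1^∞ ∫_1^∞ [(x_1 − 1)(x_1 x_2 − 1)]^{-1} ∏_{j=1}^2 (log x_j)^{s_j − 1} / (Γ(s_j) x_j) dx_1 dx_2, where ζ(s_1,s_2) = ∑_{k_1 > k_2 > 0} k_1^{-s_1} k_2^{-s_2} and Γ is the Gamma function. -/
/-!
Expanding `(x₁ - 1)⁻¹` and `(x₁ x₂ - 1)⁻¹` as geometric series turns the integrand into a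
nonnegative series of terms `a · x^(-p) · (log x)^(s-1) / (Γ(s) x)`, and the substitution
`x = eᵗ` makes each of them Euler's integral `∫₀^∞ t^(s-1) e^(-pt) dt / Γ(s) = p^(-s)`.
Integrating in `x₂` and then in `x₁`, the pair `(m, n)` of geometric indices contributes
`(m + n + 2)^(-s₁) (n + 1)^(-s₂)`, the term `k₁ = m + n + 2 > k₂ = n + 1` of `ζ(s₁, s₂)`.
-/

/-- The multiple zeta function: `ζ(s₁,…,sₙ) = ∑_{k₁ > k₂ > ⋯ > kₙ > 0} ∏ kⱼ^{-sⱼ}`. -/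
noncomputable def mzeta {n : ℕ} (s : Fin n → ℝ) : ℝ :=
  ∑' k : {k : Fin n → ℕ // (∀ i j : Fin n, i < j → k j < k i) ∧ ∀ i, 0 < k i},
    ∏ j, (k.1 j : ℝ) ^ (-(s j))

open MeasureTheory Set Real

section
variable {ι : Type*} [Countable ι]

lemma Real.hasSum_mellin {a p : ι → ℝ} {F : ℝ → ℝ} {s : ℝ} (hp : ∀ i, 0 < p i) (hs : 0 < s)
    (hF : ∀ t ∈ Ioi 0, HasSum (fun i ↦ a i * exp (-p i * t)) (F t))
    (h_sum : Summable fun i ↦ |a i| / p i ^ s) :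
    HasSum (fun i ↦ Gamma s * a i / p i ^ s) (∫ t in Ioi 0, t ^ (s - 1) * F t) := by
  have h := _root_.hasSum_mellin (a := fun i ↦ (a i : ℂ)) (F := fun t ↦ (F t : ℂ)) (s := s)
    (fun i ↦ Or.inr (hp i)) (by simpa using hs)
    (fun t ht ↦ by exact_mod_cast Complex.hasSum_ofReal.2 (hF t ht)) (by simpa using h_sum)
  have hmellin : mellin (fun t ↦ (F t : ℂ)) s = ↑(∫ t in Ioi 0, t ^ (s - 1) * F t) := by
    rw [mellin, ← integral_complex_ofReal]
    refine setIntegral_congr_fun measurableSet_Ioi fun t ht ↦ ?_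
    simp [Complex.ofReal_cpow (le_of_lt ht)]
  rw [hmellin] at h
  refine Complex.hasSum_ofReal.1 (h.congr_fun fun i ↦ ?_)
  simp [Complex.ofReal_cpow (hp i).le, Complex.Gamma_ofReal]

lemma hasSum_setIntegral_log_rpow_of_hasSum_rpow_neg {a p : ι → ℝ} {G : ℝ → ℝ} {s : ℝ}
    (hp : ∀ i, 0 < p i) (hs : 0 < s)
    (hG : ∀ x ∈ Ioi 1, HasSum (fun i ↦ a i * x ^ (-p i)) (G x))
    (h_sum : Summable fun i ↦ |a i| * p i ^ (-s)) :
    HasSum (fun i ↦ a i * p i ^ (-s))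
      (∫ x in Ioi 1, G x * (log x ^ (s - 1) / (Gamma s * x))) := by
  have hΓ : Gamma s ≠ 0 := (Gamma_pos_of_pos hs).ne'
  have hF : ∀ t ∈ Ioi 0, HasSum (fun i ↦ a i * exp (-p i * t)) (G (exp t)) := fun t ht ↦ by
    simpa [← exp_mul, mul_comm t] using hG (exp t) (one_lt_exp_iff.2 ht)
  have hsubst : ∫ x in Ioi 1, G x * (log x ^ (s - 1) / (Gamma s * x))
      = (∫ t in Ioi 0, t ^ (s - 1) * G (exp t)) / Gamma s := by
    rw [← integral_div, ← log_one, ← integral_comp_log_Ioi _ one_pos]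
    refine setIntegral_congr_fun measurableSet_Ioi fun x hx ↦ ?_
    rw [exp_log (zero_lt_one.trans hx), smul_eq_mul]
    field_simp
  have h_sum' : Summable fun i ↦ |a i| / p i ^ s := by
    simpa only [rpow_neg (hp _).le, div_eq_mul_inv] using h_sum
  rw [hsubst]
  refine ((Real.hasSum_mellin hp hs hF h_sum').div_const (Gamma s)).congr_fun fun i ↦ ?_
  rw [rpow_neg (hp i).le]
  field_simp
end

lemma hasSum_rpow_neg_nat_add_one {x : ℝ} (hx : 1 < x) :
    HasSum (fun n : ℕ ↦ x ^ (-((n : ℝ) + 1))) (x - 1)⁻¹ := by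
  have hx₀ : 0 < x := by linarith
  have h := (hasSum_geometric_of_lt_one (inv_nonneg.2 hx₀.le) (inv_lt_one_of_one_lt₀ hx)).mul_left
    x⁻¹
  have hsum : x⁻¹ * (1 - x⁻¹)⁻¹ = (x - 1)⁻¹ := by field_simp
  refine hsum ▸ h.congr_fun fun n ↦ ?_
  rw [rpow_neg hx₀.le, ← pow_succ', inv_pow]
  norm_cast

lemma summable_rpow_neg_nat_add_one {s : ℝ} (hs : 1 < s) :
    Summable fun n : ℕ ↦ ((n : ℝ) + 1) ^ (-s) := by
  simpa [abs_of_nonneg, rpow_neg, add_nonneg] using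
    (Real.summable_one_div_nat_add_rpow 1 s).2 hs

lemma hasSum_setIntegral_inv_mul_sub_one {x s : ℝ} (hx : 1 < x) (hs : 0 < s) :
    HasSum (fun n : ℕ ↦ x ^ (-((n : ℝ) + 1)) * ((n : ℝ) + 1) ^ (-s))
      (∫ y in Ioi 1, (x * y - 1)⁻¹ * (log y ^ (s - 1) / (Gamma s * y))) := by
  have hx₀ : 0 < x := by linarith
  refine hasSum_setIntegral_log_rpow_of_hasSum_rpow_neg (fun n ↦ by positivity) hs (fun y hy ↦ ?_) ?_
  · have hy₀ : (0 : ℝ) < y := zero_lt_one.trans hy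
    simpa [← mul_rpow hx₀.le hy₀.le] using
      hasSum_rpow_neg_nat_add_one (one_lt_mul_of_lt_of_le hx (le_of_lt hy))
  · refine (hasSum_rpow_neg_nat_add_one hx).summable.of_nonneg_of_le (fun n ↦ by positivity)
      fun n ↦ ?_
    rw [abs_of_nonneg (by positivity)]
    exact mul_le_of_le_one_right (by positivity)
      (rpow_le_one_of_one_le_of_nonpos (by linarith [n.cast_nonneg (α := ℝ)]) (by linarith))

lemma hasSum_setIntegral_inv_sub_one_mul {s₁ s₂ : ℝ} (h₁ : 1 < s₁) (h₂ : 1 < s₂) {H : ℝ → ℝ}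
    (hH : ∀ x ∈ Ioi 1, HasSum (fun n : ℕ ↦ x ^ (-((n : ℝ) + 1)) * ((n : ℝ) + 1) ^ (-s₂)) (H x)) :
    HasSum (fun mn : ℕ × ℕ ↦ ((mn.1 : ℝ) + mn.2 + 2) ^ (-s₁) * ((mn.2 : ℝ) + 1) ^ (-s₂))
      (∫ x in Ioi 1, (x - 1)⁻¹ * H x * (log x ^ (s₁ - 1) / (Gamma s₁ * x))) := by
  have hs₁ : 0 < s₁ := by linarith
  refine (hasSum_setIntegral_log_rpow_of_hasSum_rpow_neg (a := fun mn ↦ ((mn.2 : ℝ) + 1) ^ (-s₂))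
    (p := fun mn ↦ (mn.1 : ℝ) + mn.2 + 2) (G := fun x ↦ (x - 1)⁻¹ * H x)
    (fun _ ↦ by positivity) hs₁ (fun x hx ↦ ?_) ?_).congr_fun fun _ ↦ mul_comm _ _
  · have hx₀ : (0 : ℝ) < x := zero_lt_one.trans hx
    have hgeom := hasSum_rpow_neg_nat_add_one hx
    refine (hgeom.mul (hH x hx) (hgeom.summable.mul_of_nonneg (hH x hx).summable
      (fun _ ↦ by positivity) (fun _ ↦ by positivity))).congr_fun fun mn ↦ ?_
    rw [← mul_assoc, ← rpow_add hx₀, mul_comm]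
    congr 2
    ring
  · refine ((summable_rpow_neg_nat_add_one h₁).mul_of_nonneg
      (summable_rpow_neg_nat_add_one h₂) (fun _ ↦ by positivity)
      (fun _ ↦ by positivity)).of_nonneg_of_le (fun _ ↦ by positivity) fun mn ↦ ?_
    rw [abs_of_nonneg (by positivity), mul_comm]
    refine mul_le_mul_of_nonneg_right (rpow_le_rpow_of_nonpos (by positivity) ?_ (by linarith))
      (by positivity)
    linarith [mn.2.cast_nonneg (α := ℝ)]

def depthTwoIndexEquiv :
    ℕ × ℕ ≃ {k : Fin 2 → ℕ // (∀ i j : Fin 2, i < j → k j < k i) ∧ ∀ i, 0 < k i} where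
  toFun mn := ⟨![mn.1 + mn.2 + 2, mn.2 + 1], by
    refine ⟨fun i j hij ↦ ?_, fun i ↦ ?_⟩
    · fin_cases i <;> fin_cases j <;> simp_all
    · fin_cases i <;> simp⟩
  invFun k := (k.1 0 - k.1 1 - 1, k.1 1 - 1)
  left_inv mn := by
    simp only [Matrix.cons_val_zero, Matrix.cons_val_one, Prod.ext_iff]
    omega
  right_inv := by
    rintro ⟨k, hk, hk_pos⟩
    have h₀₁ : k 1 < k 0 := hk 0 1 (by decide)
    have h₁ : 0 < k 1 := hk_pos 1
    refine Subtype.ext (funext fun i ↦ ?_)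
    fin_cases i <;> simp <;> omega

lemma mzeta_two_eq_tsum (s₁ s₂ : ℝ) :
    mzeta ![s₁, s₂] =
      ∑' mn : ℕ × ℕ, ((mn.1 : ℝ) + mn.2 + 2) ^ (-s₁) * ((mn.2 : ℝ) + 1) ^ (-s₂) := by
  rw [mzeta, ← depthTwoIndexEquiv.tsum_eq]
  refine tsum_congr fun mn ↦ ?_
  simp [depthTwoIndexEquiv, Fin.prod_univ_two]

theorem stmt7 (s₁ s₂ : ℝ) (h₁ : 1 < s₁) (h₂ : 1 < s₂) :
    mzeta ![s₁, s₂] =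
      ∫ x₁ in Set.Ioi (1 : ℝ), ∫ x₂ in Set.Ioi (1 : ℝ),
        ((x₁ - 1) * (x₁ * x₂ - 1))⁻¹ *
          (Real.log x₁ ^ (s₁ - 1) / (Real.Gamma s₁ * x₁)) *
          (Real.log x₂ ^ (s₂ - 1) / (Real.Gamma s₂ * x₂)) := by
  have hfactor : ∀ x₁ ∈ Ioi (1 : ℝ),
      ∫ x₂ in Ioi (1 : ℝ), ((x₁ - 1) * (x₁ * x₂ - 1))⁻¹ *
          (log x₁ ^ (s₁ - 1) / (Gamma s₁ * x₁)) * (log x₂ ^ (s₂ - 1) / (Gamma s₂ * x₂))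
        = (x₁ - 1)⁻¹ * (∫ x₂ in Ioi 1, (x₁ * x₂ - 1)⁻¹ * (log x₂ ^ (s₂ - 1) / (Gamma s₂ * x₂))) *
          (log x₁ ^ (s₁ - 1) / (Gamma s₁ * x₁)) := fun x₁ _ ↦ by
    rw [← integral_const_mul, ← integral_mul_const]
    refine integral_congr_ae (Filter.Eventually.of_forall fun x₂ ↦ ?_)
    simp only [mul_inv]
    ring
  rw [mzeta_two_eq_tsum, setIntegral_congr_fun measurableSet_Ioi hfactor]
  exact (hasSum_setIntegral_inv_sub_one_mul h₁ h₂ fun x hx ↦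
    hasSum_setIntegral_inv_mul_sub_one hx (by linarith)).tsum_eq
end

section
/- Let n and q be positive integers, and let a_1, ..., a_q be integers. For each h with 1 ≤ h ≤ q, let the h-th legal term be given by an unordered set partition {P_1, ..., P_m} of {1, ..., n} together with, for each k, an ordered set partition (P_k^{(1)}, ..., P_k^{(α_k)}) of P_k; the legal term is the function of real variables s_1 > 1, ..., s_n > 1 given by T_h(s) = ∏_{k=1}^m ζ(t_k^{(1)}, ..., t_k^{(α_k)}) where t_k^{(r)} = ∑_{j ∈ P_k^{(r)}} s_j, and its associated rational function is R_h(x_1, ..., x_n) = ∏_{k=1}^m ∏_{β=1}^{α_k} (∏_{λ=1}^{β} ∏_{j ∈ P_k^{(λ)}} x_j − 1)^{-1}. Then ∑_{h=1}^q a_h T_h(s_1, ..., s_n) = 0 for all real s_1 > 1, ..., s_n > 1 if and only if ∑_{h=1}^q a_h R_h(x_1, ..., x_n) = 0 for all real x_1 > 1, ..., x_n > 1. -/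
/-- A legal term for `(s₁,…,sₙ)`: an unordered set partition of `{1,…,n}` into parts
`P₁,…,Pₘ` (indexed here by `Fin m`), together with an ordered set partition
`(Pₖ⁽¹⁾,…,Pₖ^(αₖ))` of each part `Pₖ`. -/
structure LegalTerm (n : ℕ) where
  m : ℕ
  hm : 0 < m
  α : Fin m → ℕ
  hα : ∀ k, 0 < α k
  parts : (k : Fin m) → Fin (α k) → Finset (Fin n)
  nonempty : ∀ k r, (parts k r).Nonempty
  disj : ∀ (k k' : Fin m) (r : Fin (α k)) (r' : Fin (α k')),
    (⟨k, r⟩ : Σ k, Fin (α k)) ≠ ⟨k', r'⟩ → Disjoint (parts k r) (parts k' r')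
  cover : ∀ j : Fin n, ∃ k r, j ∈ parts k r

/-- The value of a legal term: `∏ₖ ζ(tₖ⁽¹⁾,…,tₖ^(αₖ))` where `tₖ⁽ʳ⁾ = ∑_{j ∈ Pₖ⁽ʳ⁾} sⱼ`. -/
noncomputable def LegalTerm.eval {n : ℕ} (T : LegalTerm n) (s : Fin n → ℝ) : ℝ :=
  ∏ k, mzeta fun r : Fin (T.α k) => ∑ j ∈ T.parts k r, s j

/-- The rational function associated with a legal term:
`∏ₖ ∏_β (∏_{λ ≤ β} ∏_{j ∈ Pₖ^(λ)} xⱼ - 1)⁻¹`. -/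
noncomputable def LegalTerm.rat {n : ℕ} (T : LegalTerm n) (x : Fin n → ℝ) : ℝ :=
  ∏ k, ∏ β : Fin (T.α k), ((∏ lam ∈ Finset.Iic β, ∏ j ∈ T.parts k lam, x j) - 1)⁻¹

/-!
Expanding every zeta value into its defining series, and every factor `(A - 1)⁻¹` of the
rational function into the geometric series `∑_{m ≥ 1} A⁻ᵐ`, turns a legal term `T` into
`∑_{κ ∈ supp T} ∏ⱼ κⱼ^(-sⱼ)` and its rational function into `∑_{κ ∈ supp T} ∏ⱼ xⱼ^(-κⱼ)`, over
the same exponent vectors `κ`: those constant on each part `Pₖ⁽ʳ⁾` and strictly decreasing in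
`r` along each ordered partition. (On the rational side the product of geometric series, indexed
by the gaps `mᵦ`, is reindexed by the suffix sums `kᵣ = ∑_{β ≥ r} (mᵦ + 1)`, which run exactly
over `k₁ > ⋯ > k_α > 0`.) So both linear combinations are series with the same coefficients
`c κ = ∑_{h : κ ∈ supp Tₕ} aₕ`, and both are generalised Dirichlet series
`∑ c κ exp (-∑ⱼ ℓ(κⱼ) tⱼ)` with increasing frequencies (`ℓ = log`, `t = s`, resp. `ℓ = id`,
`t = log x`). Such a series vanishes identically only if every coefficient vanishes: in one
variable, multiplying by `exp (ℓ(m) t)` for the least `m` with `c m ≠ 0` and letting `t → ∞`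
leaves `c m`; several variables follow by induction, summing over all but the first one.
-/

open Finset Filter Real Topology
open scoped ENNReal

theorem tsum_eq_toReal_tsum_ofReal {ι : Type*} {f : ι → ℝ} (hf : ∀ i, 0 ≤ f i) :
    ∑' i, f i = (∑' i, ENNReal.ofReal (f i)).toReal := by
  rw [ENNReal.tsum_toReal_eq fun _ => ENNReal.ofReal_ne_top]
  exact tsum_congr fun i => (ENNReal.toReal_ofReal (hf i)).symm

theorem ENNReal.prod_univ_tsum {m : ℕ} {β : Fin m → Type*} (f : ∀ k, β k → ℝ≥0∞) :
    ∏ k, ∑' b, f k b = ∑' g : (∀ k, β k), ∏ k, f k (g k) := by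
  induction m with
  | zero => simp
  | succ m ih =>
    rw [← (Fin.consEquiv β).tsum_eq, ENNReal.tsum_prod', Fin.prod_univ_succ,
      ih fun k => f k.succ, ← ENNReal.tsum_mul_right]
    refine tsum_congr fun b => ?_
    rw [← ENNReal.tsum_mul_left]
    refine tsum_congr fun g => ?_
    simp [Fin.consEquiv, Fin.prod_univ_succ]

theorem ENNReal.tsum_ofReal_pi_prod {m : ℕ} {β : Fin m → Type*} {f : ∀ k, β k → ℝ}
    (hf : ∀ k b, 0 ≤ f k b) :
    ∑' g : (∀ k, β k), ENNReal.ofReal (∏ k, f k (g k)) = ∏ k, ∑' b, ENNReal.ofReal (f k b) := by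
  rw [ENNReal.prod_univ_tsum]
  exact tsum_congr fun g => ENNReal.ofReal_prod_of_nonneg fun k _ => hf k (g k)

theorem prod_univ_tsum_of_nonneg {m : ℕ} {β : Fin m → Type*} {f : ∀ k, β k → ℝ}
    (hf : ∀ k b, 0 ≤ f k b) : ∏ k, ∑' b, f k b = ∑' g : (∀ k, β k), ∏ k, f k (g k) := by
  rw [tsum_eq_toReal_tsum_ofReal fun g => prod_nonneg fun k _ => hf k (g k),
    ENNReal.tsum_ofReal_pi_prod hf, ENNReal.toReal_prod]
  exact prod_congr rfl fun k _ => tsum_eq_toReal_tsum_ofReal (hf k)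

theorem summable_pi_prod_of_nonneg {m : ℕ} {β : Fin m → Type*} {f : ∀ k, β k → ℝ}
    (hf : ∀ k b, 0 ≤ f k b) (hs : ∀ k, Summable (f k)) :
    Summable fun g : (∀ k, β k) => ∏ k, f k (g k) := by
  have hfin : ∑' g : (∀ k, β k), ENNReal.ofReal (∏ k, f k (g k)) ≠ ⊤ := by
    rw [ENNReal.tsum_ofReal_pi_prod hf]
    refine ENNReal.prod_ne_top fun k _ => ?_
    rw [← ENNReal.ofReal_tsum_of_nonneg (hf k) (hs k)]
    exact ENNReal.ofReal_ne_top
  refine (ENNReal.summable_toReal hfin).congr fun g => ?_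
  exact ENNReal.toReal_ofReal (prod_nonneg fun k _ => hf k _)

theorem eq_zero_of_forall_hasSum_mul_exp {S : Set ℕ} {ℓ : ℕ → ℝ} (hℓ : StrictMonoOn ℓ S)
    {t₀ : ℝ} {d : ℕ → ℝ} (hd : ∀ i, d i ≠ 0 → i ∈ S)
    (h : ∀ t, t₀ < t → HasSum (fun i => d i * exp (-(ℓ i * t))) 0) : d = 0 := by
  classical
  by_contra hne
  have hex : ∃ i, d i ≠ 0 := Function.ne_iff.mp hne
  set m := Nat.find hex
  have hm : d m ≠ 0 := Nat.find_spec hex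
  have hℓm : ∀ i, d i ≠ 0 → ℓ m ≤ ℓ i := fun i hi =>
    hℓ.monotoneOn (hd m hm) (hd i hi) (Nat.find_min' hex hi)
  have hℓm_lt : ∀ i, d i ≠ 0 → i ≠ m → ℓ m < ℓ i := fun i hi him =>
    hℓ (hd m hm) (hd i hi) (lt_of_le_of_ne (Nat.find_min' hex hi) (Ne.symm him))
  -- multiplying by `exp (ℓ m * t)` isolates the leading coefficient `d m` as `t → ∞`
  let g : ℝ → ℕ → ℝ := fun t i => d i * exp (-((ℓ i - ℓ m) * t))
  have hg : ∀ t, t₀ < t → HasSum (g t) 0 := fun t ht => by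
    have hgt : g t = fun i => exp (ℓ m * t) * (d i * exp (-(ℓ i * t))) := by
      funext i
      simp only [g]
      rw [mul_left_comm, ← exp_add]
      ring_nf
    simpa [hgt] using (h t ht).mul_left (exp (ℓ m * t))
  have hlim : Tendsto (fun t => ∑' i, g t i) atTop (𝓝 (∑' i, if i = m then d m else 0)) := by
    refine tendsto_tsum_of_dominated_convergence (bound := fun i => |g (t₀ + 1) i|)
      (hg _ (lt_add_one t₀)).summable.abs (fun i => ?_) ?_
    · by_cases him : i = m
      · simp [g, him]
      by_cases hdi : d i = 0
      · simp [g, him, hdi]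
      rw [if_neg him, ← mul_zero (d i)]
      exact (tendsto_exp_neg_atTop_nhds_zero.comp
        (tendsto_id.const_mul_atTop (sub_pos.2 (hℓm_lt i hdi him)))).const_mul (d i)
    · filter_upwards [eventually_ge_atTop (t₀ + 1)] with t ht i
      simp only [g, Real.norm_eq_abs, abs_mul, abs_exp]
      by_cases hdi : d i = 0
      · simp [hdi]
      gcongr
      exact sub_nonneg.2 (hℓm i hdi)
  rw [tsum_ite_eq] at hlim
  exact hm (tendsto_nhds_unique hlim (tendsto_const_nhds.congr'
    ((eventually_gt_atTop t₀).mono fun t ht => ((hg t ht).tsum_eq).symm)))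

theorem exp_neg_sum_cons {n : ℕ} (ℓ : ℕ → ℝ) (m : ℕ) (κ : Fin n → ℕ) (y : ℝ) (t : Fin n → ℝ) :
    exp (-∑ j, ℓ ((Fin.cons m κ : Fin (n + 1) → ℕ) j) * (Fin.cons y t : Fin (n + 1) → ℝ) j) =
      exp (-∑ j, ℓ (κ j) * t j) * exp (-(ℓ m * y)) := by
  rw [Fin.sum_univ_succ, neg_add, exp_add, mul_comm]
  simp

theorem eq_zero_of_forall_hasSum_mul_exp_sum {S : Set ℕ} {ℓ : ℕ → ℝ} (hℓ : StrictMonoOn ℓ S)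
    {t₀ : ℝ} {n : ℕ} {c : (Fin n → ℕ) → ℝ} (hc : ∀ κ, c κ ≠ 0 → ∀ j, κ j ∈ S)
    (h : ∀ t : Fin n → ℝ, (∀ j, t₀ < t j) →
      HasSum (fun κ => c κ * exp (-∑ j, ℓ (κ j) * t j)) 0) : c = 0 := by
  induction n with
  | zero =>
    funext κ
    have h0 := (h (fun _ => t₀) fun j => j.elim0).unique
      (hasSum_single κ fun κ' hκ' => absurd (Subsingleton.elim κ' κ) hκ')
    simpa using h0.symm
  | succ n ih =>
    have hsplit : ∀ t : Fin n → ℝ, (∀ j, t₀ < t j) → ∀ y, t₀ < y →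
        HasSum (fun p : ℕ × (Fin n → ℕ) =>
          c (Fin.cons p.1 p.2) * exp (-∑ j, ℓ (p.2 j) * t j) * exp (-(ℓ p.1 * y))) 0 := by
      intro t ht y hy
      refine ((Fin.consEquiv fun _ => ℕ).hasSum_iff.mpr
        (h (Fin.cons y t) (Fin.cases hy ht))).congr_fun fun p => ?_
      simp only [Function.comp_apply, Fin.consEquiv, Equiv.coe_fn_mk, exp_neg_sum_cons, mul_assoc]
    have hslice : ∀ t : Fin n → ℝ, (∀ j, t₀ < t j) → ∀ m,
        Summable fun κ => c (Fin.cons m κ) * exp (-∑ j, ℓ (κ j) * t j) := by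
      intro t ht m
      have hm := (hsplit t ht (t₀ + 1) (lt_add_one _)).summable.prod_factor m
      exact (summable_mul_right_iff (exp_pos (-(ℓ m * (t₀ + 1)))).ne').1 hm
    have hslice_zero : ∀ t : Fin n → ℝ, (∀ j, t₀ < t j) → ∀ m,
        ∑' κ, c (Fin.cons m κ) * exp (-∑ j, ℓ (κ j) * t j) = 0 := by
      intro t ht
      refine congrFun (eq_zero_of_forall_hasSum_mul_exp hℓ (t₀ := t₀) (fun m hm => ?_)
        fun y hy => ?_)
      · by_contra hmS
        have hzero : ∀ κ, c (Fin.cons m κ) = 0 := fun κ =>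
          not_not.1 fun hne => hmS (by simpa using hc _ hne 0)
        simp [hzero] at hm
      · exact (hsplit t ht y hy).prod_fiberwise fun m => (hslice t ht m).hasSum.mul_right _
    funext κ
    rw [← Fin.cons_self_tail κ]
    refine congrFun (ih (c := fun κ' => c (Fin.cons (κ 0) κ'))
      (fun κ' hκ' j => by simpa using hc _ hκ' j.succ) fun t ht => ?_) (Fin.tail κ)
    simpa [hslice_zero t ht] using (hslice t ht (κ 0)).hasSum

theorem eq_zero_of_forall_hasSum_mul_prod_rpow {n : ℕ} {c : (Fin n → ℕ) → ℝ}
    (hc : ∀ κ, c κ ≠ 0 → ∀ j, 0 < κ j)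
    (h : ∀ s : Fin n → ℝ, (∀ j, 1 < s j) →
      HasSum (fun κ => c κ * ∏ j, (κ j : ℝ) ^ (-s j)) 0) : c = 0 := by
  refine eq_zero_of_forall_hasSum_mul_exp_sum (S := Set.Ioi 0) (ℓ := fun m => log m) (t₀ := 1)
    (fun a ha b _ hab => log_lt_log (Nat.cast_pos.2 ha) (Nat.cast_lt.2 hab)) hc
    fun s hs => (h s hs).congr_fun fun κ => ?_
  by_cases hκ : c κ = 0
  · simp [hκ]
  rw [← sum_neg_distrib, exp_sum]
  refine congrArg (c κ * ·) (prod_congr rfl fun j _ => ?_)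
  rw [rpow_def_of_pos (Nat.cast_pos.2 (hc κ hκ j)), mul_neg]

theorem eq_zero_of_forall_hasSum_mul_prod_inv_pow {n : ℕ} {c : (Fin n → ℕ) → ℝ}
    (h : ∀ x : Fin n → ℝ, (∀ j, 1 < x j) →
      HasSum (fun κ => c κ * ∏ j, (x j)⁻¹ ^ κ j) 0) : c = 0 := by
  refine eq_zero_of_forall_hasSum_mul_exp_sum (S := Set.univ) (ℓ := fun m => (m : ℝ)) (t₀ := 0)
    (Nat.strictMono_cast.strictMonoOn _) (fun _ _ _ => Set.mem_univ _)
    fun t ht => (h (fun j => exp (t j)) fun j => one_lt_exp_iff.2 (ht j)).congr_fun fun κ => ?_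
  rw [← sum_neg_distrib, exp_sum]
  refine congrArg (c κ * ·) (prod_congr rfl fun j _ => ?_)
  rw [← exp_neg, ← exp_nat_mul, mul_neg]

def posStrictAnti (a : ℕ) : Set (Fin a → ℕ) :=
  {k | (∀ i j, i < j → k j < k i) ∧ ∀ i, 0 < k i}

section GapEquiv

variable {a : ℕ}

def suffixSum (M : Fin a → ℕ) (r : Fin a) : ℕ := ∑ β ∈ Ici r, (M β + 1)

def nextVal (K : Fin a → ℕ) (r : Fin a) : ℕ := if h : r.1 + 1 < a then K ⟨r.1 + 1, h⟩ else 0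

def gaps (K : Fin a → ℕ) (r : Fin a) : ℕ := K r - nextVal K r - 1

theorem suffixSum_eq (M : Fin a → ℕ) (r : Fin a) :
    suffixSum M r = M r + 1 + nextVal (suffixSum M) r := by
  rw [suffixSum, ← Ioi_insert, sum_insert notMem_Ioi_self, nextVal]
  congr 1
  split_ifs with h
  · refine sum_congr ?_ fun _ _ => rfl
    ext β
    simp only [mem_Ioi, mem_Ici, Fin.lt_def, Fin.le_def]
    omega
  · refine sum_eq_zero fun β hβ => absurd (mem_Ioi.1 hβ) ?_
    rw [Fin.lt_def]
    omega

theorem suffixSum_mem (M : Fin a → ℕ) : suffixSum M ∈ posStrictAnti a := by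
  refine ⟨fun i j hij => ?_, fun r => by rw [suffixSum_eq]; omega⟩
  refine sum_lt_sum_of_subset (fun β hβ => mem_Ici.2 (hij.le.trans (mem_Ici.1 hβ)))
    (mem_Ici.2 le_rfl) (by simpa using hij) (Nat.succ_pos _) fun _ _ _ => Nat.zero_le _

theorem nextVal_lt {K : Fin a → ℕ} (hK : K ∈ posStrictAnti a) (r : Fin a) : nextVal K r < K r := by
  unfold nextVal
  split_ifs with h
  · exact hK.1 _ _ (Fin.lt_def.2 (Nat.lt_succ_self _))
  · exact hK.2 r

theorem gaps_suffixSum (M : Fin a → ℕ) : gaps (suffixSum M) = M := by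
  funext r
  have := suffixSum_eq M r
  simp only [gaps]
  omega

theorem suffixSum_gaps {K : Fin a → ℕ} (hK : K ∈ posStrictAnti a) (r : Fin a) :
    suffixSum (gaps K) r = K r := by
  have hnext : nextVal (suffixSum (gaps K)) r = nextVal K r := by
    unfold nextVal
    split_ifs with h
    · exact suffixSum_gaps hK _
    · rfl
  have := nextVal_lt hK r
  rw [suffixSum_eq, hnext, gaps]
  omega
termination_by a - r.1

def gapEquiv (a : ℕ) : (Fin a → ℕ) ≃ posStrictAnti a where
  toFun M := ⟨suffixSum M, suffixSum_mem M⟩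
  invFun K := gaps K.1
  left_inv := gaps_suffixSum
  right_inv K := Subtype.ext (funext (suffixSum_gaps K.2))

theorem prod_pow_suffixSum {M : Type*} [CommMonoid M] (u : Fin a → M) (g : Fin a → ℕ) :
    ∏ r, u r ^ suffixSum g r = ∏ β, (∏ r ∈ Iic β, u r) ^ (g β + 1) := by
  simp_rw [← prod_pow]
  rw [prod_comm' (t' := univ) (s' := fun r => Ici r) (by simp)]
  simp_rw [prod_pow_eq_pow_sum, suffixSum]

end GapEquiv

theorem tsum_inv_pow_succ {A : ℝ} (hA : 1 < A) : ∑' m : ℕ, A⁻¹ ^ (m + 1) = (A - 1)⁻¹ := by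
  have hA0 : 0 < A := one_pos.trans hA
  simp_rw [pow_succ', tsum_mul_left]
  rw [tsum_geometric_of_lt_one (inv_nonneg.2 hA0.le) (inv_lt_one_of_one_lt₀ hA)]
  field_simp

theorem one_lt_prod_of_one_lt {ι R : Type*} [CommMonoidWithZero R] [PartialOrder R]
    [ZeroLEOneClass R] [PosMulStrictMono R] [Nontrivial R] {s : Finset ι} {f : ι → R}
    (hf : ∀ i ∈ s, 1 < f i) (hs : s.Nonempty) : 1 < ∏ i ∈ s, f i := by
  simpa using prod_lt_prod_of_nonempty (fun _ _ => one_pos) hf hs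

theorem tsum_posStrictAnti_prod_inv_pow {a : ℕ} {P : Fin a → ℝ} (hP : ∀ r, 1 < P r) :
    ∑' K : posStrictAnti a, ∏ r, (P r)⁻¹ ^ K.1 r = ∏ β, ((∏ r ∈ Iic β, P r) - 1)⁻¹ := by
  have hA : ∀ β : Fin a, 1 < ∏ r ∈ Iic β, P r := fun β =>
    one_lt_prod_of_one_lt (fun r _ => hP r) ⟨β, mem_Iic.2 le_rfl⟩
  calc ∑' K : posStrictAnti a, ∏ r, (P r)⁻¹ ^ K.1 r
      = ∑' g : Fin a → ℕ, ∏ β, (∏ r ∈ Iic β, P r)⁻¹ ^ (g β + 1) := by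
        rw [← (gapEquiv a).tsum_eq]
        refine tsum_congr fun g => ?_
        simp_rw [← prod_inv_distrib]
        exact prod_pow_suffixSum _ g
    _ = ∏ β, ∑' m : ℕ, (∏ r ∈ Iic β, P r)⁻¹ ^ (m + 1) :=
        (prod_univ_tsum_of_nonneg fun β m =>
          pow_nonneg (inv_nonneg.2 (one_pos.trans (hA β)).le) _).symm
    _ = ∏ β, ((∏ r ∈ Iic β, P r) - 1)⁻¹ := prod_congr rfl fun β _ => tsum_inv_pow_succ (hA β)

namespace LegalTerm

variable {n : ℕ} (T : LegalTerm n)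

noncomputable def block (j : Fin n) : Σ k, Fin (T.α k) :=
  ⟨(T.cover j).choose, (T.cover j).choose_spec.choose⟩

theorem mem_parts_block (j : Fin n) : j ∈ T.parts (T.block j).1 (T.block j).2 :=
  (T.cover j).choose_spec.choose_spec

theorem block_eq_of_mem {j : Fin n} {k : Fin T.m} {r : Fin (T.α k)} (h : j ∈ T.parts k r) :
    T.block j = ⟨k, r⟩ := by
  by_contra hne
  exact disjoint_left.1 (T.disj _ _ _ _ hne) (T.mem_parts_block j) h

theorem prod_univ_eq_prod_parts {M : Type*} [CommMonoid M] (f : Fin n → M) :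
    ∏ j, f j = ∏ k, ∏ r, ∏ j ∈ T.parts k r, f j := by
  classical
  rw [← prod_fiberwise univ T.block f, ← univ_sigma_univ, prod_sigma]
  refine prod_congr rfl fun k _ => prod_congr rfl fun r _ => prod_congr ?_ fun _ _ => rfl
  ext j
  simp only [mem_filter, mem_univ, true_and]
  refine ⟨fun h => ?_, T.block_eq_of_mem⟩
  have hj := T.mem_parts_block j
  rwa [h] at hj

noncomputable def spread (K : ∀ k, Fin (T.α k) → ℕ) (j : Fin n) : ℕ :=
  K (T.block j).1 (T.block j).2

theorem spread_of_mem (K : ∀ k, Fin (T.α k) → ℕ) {j : Fin n} {k : Fin T.m} {r : Fin (T.α k)}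
    (h : j ∈ T.parts k r) : T.spread K j = K k r := by
  rw [spread, T.block_eq_of_mem h]

theorem spread_injective :
    Function.Injective fun K : (∀ k, posStrictAnti (T.α k)) => T.spread fun k => K k := by
  intro K K' h
  funext k
  refine Subtype.ext (funext fun r => ?_)
  obtain ⟨j, hj⟩ := T.nonempty k r
  simpa [T.spread_of_mem _ hj] using congrFun h j

def supp : Set (Fin n → ℕ) :=
  Set.range fun K : (∀ k, posStrictAnti (T.α k)) => T.spread fun k => K k

theorem pos_of_mem_supp {κ : Fin n → ℕ} (h : κ ∈ T.supp) (j : Fin n) : 0 < κ j := by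
  obtain ⟨K, rfl⟩ := h
  exact (K _).2.2 _

theorem tsum_supp_prod {g : Fin n → ℕ → ℝ} (hg : ∀ j m, 0 ≤ g j m) :
    ∑' κ : T.supp, ∏ j, g j (κ.1 j) =
      ∏ k, ∑' K : posStrictAnti (T.α k), ∏ r, ∏ j ∈ T.parts k r, g j (K.1 r) := by
  rw [supp, tsum_range (fun κ => ∏ j, g j (κ j)) T.spread_injective,
    prod_univ_tsum_of_nonneg fun k K => prod_nonneg fun r _ => prod_nonneg fun j _ => hg j _]
  refine tsum_congr fun K => ?_
  rw [T.prod_univ_eq_prod_parts]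
  exact prod_congr rfl fun k _ => prod_congr rfl fun r _ => prod_congr rfl fun j hj => by
    rw [T.spread_of_mem _ hj]

theorem eval_eq_tsum (s : Fin n → ℝ) : T.eval s = ∑' κ : T.supp, ∏ j, (κ.1 j : ℝ) ^ (-s j) := by
  rw [T.tsum_supp_prod fun j m => rpow_nonneg (Nat.cast_nonneg m) _, eval]
  refine prod_congr rfl fun k _ => tsum_congr fun K => prod_congr rfl fun r _ => ?_
  rw [← rpow_sum_of_pos (Nat.cast_pos.2 (K.2.2 r)), sum_neg_distrib]

theorem rat_eq_tsum {x : Fin n → ℝ} (hx : ∀ j, 1 < x j) :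
    T.rat x = ∑' κ : T.supp, ∏ j, (x j)⁻¹ ^ κ.1 j := by
  rw [T.tsum_supp_prod fun j m => pow_nonneg (inv_nonneg.2 (one_pos.trans (hx j)).le) m, rat]
  refine prod_congr rfl fun k _ => ?_
  rw [← tsum_posStrictAnti_prod_inv_pow fun r =>
    one_lt_prod_of_one_lt (fun j _ => hx j) (T.nonempty k r)]
  refine tsum_congr fun K => prod_congr rfl fun r _ => ?_
  rw [prod_pow, prod_inv_distrib]

end LegalTerm

theorem hasSum_sum_mul_indicator {α ι : Type*} [Fintype ι] (a : ι → ℝ) (S : ι → Set α)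
    {F : α → ℝ} (hF : Summable F) :
    HasSum (fun x => (∑ i, a i * (S i).indicator 1 x) * F x) (∑ i, a i * ∑' x : S i, F x) := by
  simp_rw [_root_.tsum_subtype]
  refine (hasSum_sum fun i _ => (hF.indicator (S i)).hasSum.mul_left (a i)).congr_fun fun x => ?_
  rw [sum_mul]
  refine sum_congr rfl fun i _ => ?_
  by_cases hx : x ∈ S i <;> simp [hx]

section Combination

variable {n : ℕ} {ι : Type*} [Fintype ι] (a : ι → ℝ) (T : ι → LegalTerm n)

noncomputable def combCoeff (κ : Fin n → ℕ) : ℝ := ∑ h, a h * (T h).supp.indicator 1 κ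

theorem pos_of_combCoeff_ne_zero {κ : Fin n → ℕ} (hκ : combCoeff a T κ ≠ 0) (j : Fin n) :
    0 < κ j := by
  obtain ⟨h, _, hh⟩ := exists_ne_zero_of_sum_ne_zero hκ
  exact (T h).pos_of_mem_supp (Set.mem_of_indicator_ne_zero (right_ne_zero_of_mul hh)) j

theorem hasSum_combCoeff_mul_eval {s : Fin n → ℝ} (hs : ∀ j, 1 < s j) :
    HasSum (fun κ => combCoeff a T κ * ∏ j, (κ j : ℝ) ^ (-s j)) (∑ h, a h * (T h).eval s) := by
  simp_rw [LegalTerm.eval_eq_tsum]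
  refine hasSum_sum_mul_indicator a (fun h => (T h).supp)
    (F := fun κ => ∏ j, (κ j : ℝ) ^ (-s j))
    (summable_pi_prod_of_nonneg (f := fun j (m : ℕ) => (m : ℝ) ^ (-s j))
      (fun j m => rpow_nonneg (Nat.cast_nonneg m) _) fun j => ?_)
  exact summable_nat_rpow.2 (by linarith [hs j])

theorem hasSum_combCoeff_mul_rat {x : Fin n → ℝ} (hx : ∀ j, 1 < x j) :
    HasSum (fun κ => combCoeff a T κ * ∏ j, (x j)⁻¹ ^ κ j) (∑ h, a h * (T h).rat x) := by
  simp_rw [LegalTerm.rat_eq_tsum _ hx]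
  have hx₀ : ∀ j, 0 ≤ (x j)⁻¹ := fun j => inv_nonneg.2 (one_pos.trans (hx j)).le
  exact hasSum_sum_mul_indicator a (fun h => (T h).supp) (F := fun κ => ∏ j, (x j)⁻¹ ^ κ j)
    (summable_pi_prod_of_nonneg (fun j m => pow_nonneg (hx₀ j) m)
      fun j => summable_geometric_of_lt_one (hx₀ j) (inv_lt_one_of_one_lt₀ (hx j)))

end Combination

theorem stmt8_general (n q : ℕ) (a : Fin q → ℤ) (T : Fin q → LegalTerm n) :
    (∀ s : Fin n → ℝ, (∀ j, 1 < s j) → ∑ h, (a h : ℝ) * (T h).eval s = 0) ↔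
      (∀ x : Fin n → ℝ, (∀ j, 1 < x j) → ∑ h, (a h : ℝ) * (T h).rat x = 0) := by
  set a' : Fin q → ℝ := fun h => a h
  constructor
  · intro H x hx
    have hc : combCoeff a' T = 0 := eq_zero_of_forall_hasSum_mul_prod_rpow
      (fun _ => pos_of_combCoeff_ne_zero a' T)
      fun s hs => H s hs ▸ hasSum_combCoeff_mul_eval a' T hs
    have hrat := hasSum_combCoeff_mul_rat a' T hx
    simp only [hc, Pi.zero_apply, zero_mul] at hrat
    exact (hasSum_zero.unique hrat).symm
  · intro H s hs
    have hc : combCoeff a' T = 0 := eq_zero_of_forall_hasSum_mul_prod_inv_pow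
      fun x hx => H x hx ▸ hasSum_combCoeff_mul_rat a' T hx
    have heval := hasSum_combCoeff_mul_eval a' T hs
    simp only [hc, Pi.zero_apply, zero_mul] at heval
    exact (hasSum_zero.unique heval).symm

theorem stmt8 (n q : ℕ) (hn : 0 < n) (hq : 0 < q) (a : Fin q → ℤ) (T : Fin q → LegalTerm n) :
    (∀ s : Fin n → ℝ, (∀ j, 1 < s j) → ∑ h, (a h : ℝ) * (T h).eval s = 0) ↔
      (∀ x : Fin n → ℝ, (∀ j, 1 < x j) → ∑ h, (a h : ℝ) * (T h).rat x = 0) :=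
  stmt8_general n q a T
end

section
/- Let F be a finite non-empty set of positive integers, and for each ordered set partition P⃗ = (P_1, ..., P_m) of F let c_{P⃗} be a real number. Suppose that for all real values s_j > 1 (j ∈ F), ∑_{P⃗ ⊨ F} c_{P⃗} ζ(∑_{j ∈ P_1} s_j, ∑_{j ∈ P_2} s_j, ..., ∑_{j ∈ P_m} s_j) = 0, where the sum is over all ordered set partitions P⃗ of F. Then c_{P⃗} = 0 for every ordered set partition P⃗ of F. -/
/-- An ordered set partition of a finite set `F` of positive integers: a tuple
`(P₁,…,Pₘ)` of pairwise disjoint non-empty subsets of `F` whose union is `F`. -/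
structure OrdPartition (F : Finset ℕ) where
  m : ℕ
  parts : Fin m → Finset ℕ
  nonempty : ∀ k, (parts k).Nonempty
  disj : ∀ k k', k ≠ k' → Disjoint (parts k) (parts k')
  cover : ∀ j : ℕ, j ∈ F ↔ ∃ k, j ∈ parts k

/-!
Put `s_j = σ τ_j` and let `σ → ∞`. For a partition into `m` parts with block sums `T_t`, the
series `ζ(σ T)` is dominated by its term `k = (m, m-1, …, 1)`: by dominated convergence
`ζ(σ T) · ∏_t (m - t) ^ (σ T_t) → 1`, because every other term contains a factor
`((m - t) / k_t) ^ (σ T_t)` with base `< 1`. So the term of `P` behaves like `exp (-σ w(P))` with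
`w(P) = ∑_{j ∈ F} τ_j log (rank_P j)`, where `rank_P j = m - t` for `j ∈ P_t`. For `τ_j = B ^ j`
with `B` large, `w(P)` is a base-`B` expansion with digits `log (rank_P j)`, hence `w` is
injective, and after multiplying the vanishing sum by `exp (σ w(P₀))` for the lightest `P₀` with
`c P₀ ≠ 0`, it tends to `c P₀`.
-/

open Filter Finset Real Topology

theorem eq_zero_of_sum_pow_mul_eq_zero {S : Finset ℕ} {B R δ : ℝ} {Δ : ℕ → ℝ} (hB : 1 ≤ B)
    (hRδ : R ≤ δ * (B - 1)) (hR : ∀ i ∈ S, |Δ i| ≤ R) (hδ : ∀ i ∈ S, Δ i ≠ 0 → δ ≤ |Δ i|)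
    (hsum : ∑ i ∈ S, B ^ i * Δ i = 0) : ∀ i ∈ S, Δ i = 0 := by
  induction S using Finset.induction_on_max with
  | empty => simp
  | insert a s hlt ih =>
    have has : a ∉ s := fun h => (hlt a h).false
    simp only [mem_insert, forall_eq_or_imp, sum_insert has] at hR hδ hsum ⊢
    have hB0 : 0 ≤ B := zero_le_one.trans hB
    -- The top digit dominates: `|B ^ a * Δ a| ≥ B ^ a * δ`, whereas the lower digits contribute
    -- at most `R * (B ^ a - 1) / (B - 1) < B ^ a * δ`.
    have hΔa : Δ a = 0 := by
      by_contra hne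
      have hR0 : 0 ≤ R := (abs_nonneg _).trans hR.1
      have hBa : 0 ≤ B ^ a := pow_nonneg hB0 a
      have hbound : B ^ a * |Δ a| ≤ (∑ i ∈ range a, B ^ i) * R := by
        calc B ^ a * |Δ a| = |∑ i ∈ s, B ^ i * Δ i| := by
              rw [eq_neg_of_add_eq_zero_right hsum, abs_neg, abs_mul, abs_of_nonneg hBa]
          _ ≤ ∑ i ∈ s, B ^ i * R := by
              refine (abs_sum_le_sum_abs _ _).trans (sum_le_sum fun i hi => ?_)
              rw [abs_mul, abs_of_nonneg (pow_nonneg hB0 i)]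
              exact mul_le_mul_of_nonneg_left (hR.2 i hi) (pow_nonneg hB0 i)
          _ ≤ ∑ i ∈ range a, B ^ i * R :=
              sum_le_sum_of_subset_of_nonneg (fun i hi => mem_range.2 (hlt i hi))
                fun i _ _ => mul_nonneg (pow_nonneg hB0 i) hR0
          _ = (∑ i ∈ range a, B ^ i) * R := (sum_mul _ _ _).symm
      have hR_le : B ^ a * R ≤ R * (B ^ a - 1) :=
        calc B ^ a * R ≤ B ^ a * (δ * (B - 1)) := mul_le_mul_of_nonneg_left hRδ hBa
          _ ≤ B ^ a * (|Δ a| * (B - 1)) :=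
              mul_le_mul_of_nonneg_left
                (mul_le_mul_of_nonneg_right (hδ.1 hne) (sub_nonneg.2 hB)) hBa
          _ ≤ (∑ i ∈ range a, B ^ i) * R * (B - 1) := by
              rw [← mul_assoc]; exact mul_le_mul_of_nonneg_right hbound (sub_nonneg.2 hB)
          _ = R * (B ^ a - 1) := by rw [mul_right_comm, geom_sum_mul, mul_comm]
      exact hne (abs_nonpos_iff.1 (hR.1.trans (by linarith)))
    rw [hΔa, mul_zero, zero_add] at hsum
    exact ⟨hΔa, ih hR.2 hδ.2 hsum⟩

theorem inv_le_abs_log_sub_log {a b N : ℕ} (ha : 1 ≤ a) (hb : 1 ≤ b) (haN : a ≤ N) (hbN : b ≤ N)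
    (hab : a ≠ b) : (N : ℝ)⁻¹ ≤ |log a - log b| := by
  wlog hlt : b < a generalizing a b
  · rw [abs_sub_comm]
    exact this hb ha hbN haN hab.symm (lt_of_le_of_ne (not_lt.1 hlt) hab)
  have ha0 : (0 : ℝ) < a := by exact_mod_cast ha
  have hb0 : (0 : ℝ) < b := by exact_mod_cast hb
  have hab' : (b : ℝ) + 1 ≤ a := by exact_mod_cast hlt
  calc (N : ℝ)⁻¹ ≤ (a : ℝ)⁻¹ := inv_anti₀ ha0 (by exact_mod_cast haN)
    _ ≤ 1 - (a / b : ℝ)⁻¹ := by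
        rw [inv_div, one_sub_div ha0.ne', le_div_iff₀ ha0, inv_mul_cancel₀ ha0.ne']
        linarith
    _ ≤ log (a / b) := one_sub_inv_le_log_of_pos (div_pos ha0 hb0)
    _ = log a - log b := log_div ha0.ne' hb0.ne'
    _ ≤ |log a - log b| := le_abs_self _

theorem abs_log_sub_log_le {a b N : ℕ} (ha : 1 ≤ a) (hb : 1 ≤ b) (haN : a ≤ N) (hbN : b ≤ N) :
    |log a - log b| ≤ N := by
  have hlog {x : ℕ} (hx : 1 ≤ x) (hxN : x ≤ N) : 0 ≤ log x ∧ log x ≤ N :=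
    ⟨log_nonneg (by exact_mod_cast hx),
      (log_le_self (Nat.cast_nonneg x)).trans (by exact_mod_cast hxN)⟩
  exact abs_sub_le_of_nonneg_of_le (hlog ha haN).1 (hlog ha haN).2 (hlog hb hbN).1 (hlog hb hbN).2

theorem eq_zero_of_eventually_sum_mul_eq_zero {ι : Type*} [Fintype ι] {f : ι → ℝ → ℝ}
    {w : ι → ℝ} (hw : Function.Injective w)
    (hf : ∀ i, Tendsto (fun σ => f i σ * exp (σ * w i)) atTop (𝓝 1)) {c : ι → ℝ}
    (hc : ∀ᶠ σ in atTop, ∑ i, c i * f i σ = 0) : c = 0 := by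
  classical
  by_contra hne
  obtain ⟨i₀, hi₀, hmin⟩ := (univ.filter (c · ≠ 0)).exists_min_image w <| by
    obtain ⟨i, hi⟩ := Function.ne_iff.1 hne
    exact ⟨i, mem_filter.2 ⟨mem_univ i, hi⟩⟩
  simp only [mem_filter, mem_univ, true_and] at hi₀ hmin
  -- after multiplying by `exp (σ * w i₀)`, only the term `i₀` survives in the limit
  have hterm (i : ι) : Tendsto (fun σ => c i * f i σ * exp (σ * w i₀)) atTop
      (𝓝 (if i = i₀ then c i₀ else 0)) := by
    split_ifs with hi
    · subst hi
      simpa [mul_assoc] using (hf i).const_mul (c i)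
    by_cases hci : c i = 0
    · simp [hci]
    have hlt : w i₀ < w i := lt_of_le_of_ne (hmin i hci) (hw.ne (Ne.symm hi))
    have hexp : Tendsto (fun σ => exp (σ * (w i₀ - w i))) atTop (𝓝 0) :=
      tendsto_exp_atBot.comp (tendsto_id.atTop_mul_const_of_neg (by linarith))
    convert ((hf i).mul hexp).const_mul (c i) using 2 with σ
    · rw [mul_assoc, mul_assoc, ← exp_add]
      ring_nf
    · simp
  have hlim := tendsto_finsetSum univ fun i _ => hterm i
  rw [sum_ite_eq' univ i₀, if_pos (mem_univ _)] at hlim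
  refine hi₀ (tendsto_nhds_unique hlim (tendsto_const_nhds.congr' ?_))
  filter_upwards [hc] with σ hσ
  rw [← sum_mul, hσ, zero_mul]

theorem Summable.fin_pi_prod {α : Type*} {f : α → ℝ} (hf : Summable f) (h0 : 0 ≤ f) (n : ℕ) :
    Summable fun a : Fin n → α => ∏ t, f (a t) := by
  induction n with
  | zero => exact .of_finite
  | succ n ih =>
    rw [← (Fin.consEquiv fun _ => α).summable_iff]
    refine (hf.mul_of_nonneg ih h0 fun a => prod_nonneg fun t _ => h0 _).congr fun p => ?_
    simp [Fin.consEquiv, Fin.prod_univ_succ]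

def MZIndex (n : ℕ) : Type := {k : Fin n → ℕ // (∀ i j : Fin n, i < j → k j < k i) ∧ ∀ i, 0 < k i}

namespace MZIndex

variable {n : ℕ}

theorem sub_le (k : MZIndex n) (t : Fin n) : n - t ≤ k.1 t := by
  suffices ∀ d (t : Fin n), t + 1 + d = n → n - t ≤ k.1 t from this (n - t - 1) t (by omega)
  intro d
  induction d with
  | zero => intro t ht; have := k.2.2 t; omega
  | succ d ih =>
    intro t ht
    have hnext := k.2.1 t ⟨t + 1, by omega⟩ (Fin.lt_def.2 (Nat.lt_succ_self _))
    have := ih ⟨t + 1, by omega⟩ (by simp only; omega)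
    simp only at this hnext
    omega

def top (n : ℕ) : MZIndex n :=
  ⟨fun t => n - t, fun i j hij => by
    change n - j < n - i
    have := j.isLt; rw [Fin.lt_def] at hij; omega,
    fun i => by change 0 < n - i; have := i.isLt; omega⟩

noncomputable def ratio (k : MZIndex n) (t : Fin n) : ℝ := ((n - t : ℕ) : ℝ) / k.1 t

theorem ratio_pos (k : MZIndex n) (t : Fin n) : 0 < k.ratio t :=
  div_pos (by have := t.isLt; exact_mod_cast (by omega : 0 < n - t)) (by exact_mod_cast k.2.2 t)

theorem ratio_le_one (k : MZIndex n) (t : Fin n) : k.ratio t ≤ 1 :=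
  div_le_one_of_le₀ (by exact_mod_cast k.sub_le t) (Nat.cast_nonneg _)

theorem ratio_top (t : Fin n) : (top n).ratio t = 1 :=
  div_self (by have := t.isLt; exact_mod_cast (by omega : n - t ≠ 0))

theorem exists_ratio_lt_one {k : MZIndex n} (hk : k ≠ top n) : ∃ t, k.ratio t < 1 := by
  obtain ⟨t, ht⟩ : ∃ t, k.1 t ≠ n - t := by
    by_contra! h
    exact hk (Subtype.ext (funext h))
  refine ⟨t, (div_lt_one (by exact_mod_cast k.2.2 t)).2 ?_⟩
  exact_mod_cast lt_of_le_of_ne (k.sub_le t) (Ne.symm ht)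

theorem prod_ratio_rpow (k : MZIndex n) (s : Fin n → ℝ) :
    ∏ t, k.ratio t ^ s t =
      (∏ t, (k.1 t : ℝ) ^ (-s t)) * ∏ t : Fin n, ((n - t : ℕ) : ℝ) ^ s t := by
  rw [← prod_mul_distrib]
  refine prod_congr rfl fun t _ => ?_
  rw [ratio, div_rpow (Nat.cast_nonneg _) (Nat.cast_nonneg _), rpow_neg (Nat.cast_nonneg _),
    div_eq_inv_mul]

theorem summable_prod_rpow_neg_two : Summable fun k : MZIndex n => ∏ t, (k.1 t : ℝ) ^ (-2 : ℝ) :=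
  ((summable_nat_rpow.2 (by norm_num)).fin_pi_prod
    (fun x => rpow_nonneg (Nat.cast_nonneg x) _) n).subtype _

open scoped Classical in
theorem tendsto_prod_ratio_rpow {T : Fin n → ℝ} (hT : ∀ t, 1 ≤ T t)
    (k : MZIndex n) : Tendsto (fun σ => ∏ t, k.ratio t ^ (σ * T t)) atTop
      (𝓝 (if k = top n then 1 else 0)) := by
  split_ifs with hk
  · simp [hk, ratio_top]
  obtain ⟨t₀, ht₀⟩ := exists_ratio_lt_one hk
  have hlim : Tendsto (fun σ => k.ratio t₀ ^ (σ * T t₀)) atTop (𝓝 0) :=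
    (tendsto_rpow_atTop_of_base_lt_one _ (by linarith [k.ratio_pos t₀]) ht₀).comp
      (tendsto_id.atTop_mul_const (by linarith [hT t₀]))
  refine tendsto_of_tendsto_of_tendsto_of_le_of_le' tendsto_const_nhds hlim
    (.of_forall fun σ => prod_nonneg fun t _ => (rpow_pos_of_pos (k.ratio_pos t) _).le) ?_
  filter_upwards [eventually_ge_atTop 0] with σ hσ
  rw [← mul_prod_erase univ _ (mem_univ t₀)]
  refine mul_le_of_le_one_right (rpow_pos_of_pos (k.ratio_pos t₀) _).le
    (prod_le_one (fun t _ => (rpow_pos_of_pos (k.ratio_pos t) _).le) fun t _ => ?_)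
  exact rpow_le_one (k.ratio_pos t).le (k.ratio_le_one t) (mul_nonneg hσ (by linarith [hT t]))

end MZIndex

theorem mzeta_mul_prod_rpow {n : ℕ} (s : Fin n → ℝ) :
    mzeta s * ∏ t : Fin n, ((n - t : ℕ) : ℝ) ^ s t = ∑' k : MZIndex n, ∏ t, k.ratio t ^ s t := by
  rw [mzeta, ← tsum_mul_right]
  exact tsum_congr fun k => (MZIndex.prod_ratio_rpow k s).symm

theorem tendsto_mzeta_mul_exp {n : ℕ} {T : Fin n → ℝ} (hT : ∀ t, 1 ≤ T t) :
    Tendsto (fun σ => mzeta (fun t => σ * T t) * exp (σ * ∑ t : Fin n, T t * log (n - t : ℕ)))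
      atTop (𝓝 1) := by
  have hexp (σ : ℝ) : exp (σ * ∑ t : Fin n, T t * log (n - t : ℕ)) =
      ∏ t : Fin n, ((n - t : ℕ) : ℝ) ^ (σ * T t) := by
    rw [mul_sum, exp_sum]
    refine prod_congr rfl fun t _ => ?_
    rw [rpow_def_of_pos (by have := t.isLt; exact_mod_cast (by omega : 0 < n - t))]
    ring_nf
  simp_rw [hexp, mzeta_mul_prod_rpow]
  have hsum : Summable fun k : MZIndex n => ∏ t, k.ratio t ^ (2 : ℝ) := by
    simpa only [MZIndex.prod_ratio_rpow] using
      MZIndex.summable_prod_rpow_neg_two.mul_right (∏ t : Fin n, ((n - t : ℕ) : ℝ) ^ (2 : ℝ))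
  have hbound : ∀ᶠ σ in atTop, ∀ k : MZIndex n,
      ‖∏ t, k.ratio t ^ (σ * T t)‖ ≤ ∏ t, k.ratio t ^ (2 : ℝ) := by
    filter_upwards [eventually_ge_atTop 2] with σ hσ k
    rw [norm_of_nonneg (prod_nonneg fun t _ => (rpow_pos_of_pos (k.ratio_pos t) _).le)]
    exact prod_le_prod (fun t _ => (rpow_pos_of_pos (k.ratio_pos t) _).le) fun t _ =>
      rpow_le_rpow_of_exponent_ge (k.ratio_pos t) (k.ratio_le_one t) (by nlinarith [hT t])
  simpa using tendsto_tsum_of_dominated_convergence hsum (MZIndex.tendsto_prod_ratio_rpow hT) hbound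

namespace OrdPartition

variable {F : Finset ℕ}

/-- Parts are counted from the last one: `j ∈ P.parts t` has rank `P.m - t`, the value of the
`t`-th summation index in the leading term `(m, m-1, …, 1)` of `mzeta`; off `F` the rank is `0`. -/
def rank (P : OrdPartition F) (j : ℕ) : ℕ := ∑ t, if j ∈ P.parts t then P.m - t else 0

theorem rank_eq_of_mem {P : OrdPartition F} {t : Fin P.m} {j : ℕ} (h : j ∈ P.parts t) :
    P.rank j = P.m - t := by
  rw [rank, Fintype.sum_eq_single t fun t' ht' =>
    if_neg fun h' => disjoint_left.1 (P.disj t' t ht') h' h, if_pos h]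

theorem rank_eq_zero_of_notMem (P : OrdPartition F) {j : ℕ} (hj : j ∉ F) : P.rank j = 0 :=
  sum_eq_zero fun t _ => if_neg fun h => hj ((P.cover j).2 ⟨t, h⟩)

theorem mem_parts_iff_rank_eq (P : OrdPartition F) {t : Fin P.m} {j : ℕ} :
    j ∈ P.parts t ↔ P.rank j = P.m - t := by
  refine ⟨rank_eq_of_mem, fun h => ?_⟩
  have hj : j ∈ F := by
    by_contra hj
    rw [P.rank_eq_zero_of_notMem hj] at h
    omega
  obtain ⟨t', ht'⟩ := (P.cover j).1 hj
  rw [rank_eq_of_mem ht'] at h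
  obtain rfl : t' = t := Fin.ext (by omega)
  exact ht'

theorem biUnion_parts (P : OrdPartition F) : univ.biUnion P.parts = F := by
  ext j
  simp [P.cover j]

theorem m_le_card (P : OrdPartition F) : P.m ≤ F.card :=
  calc P.m = ∑ _t : Fin P.m, 1 := by simp
    _ ≤ ∑ t, (P.parts t).card := sum_le_sum fun t _ => (P.nonempty t).card_pos
    _ = F.card := by
      rw [← card_biUnion fun a _ b _ hab => P.disj a b hab, P.biUnion_parts]

theorem rank_le_m (P : OrdPartition F) (j : ℕ) : P.rank j ≤ P.m := by
  by_cases hj : j ∈ F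
  · obtain ⟨t, ht⟩ := (P.cover j).1 hj
    rw [rank_eq_of_mem ht]
    exact Nat.sub_le _ _
  · rw [P.rank_eq_zero_of_notMem hj]
    exact Nat.zero_le _

theorem one_le_rank (P : OrdPartition F) {j : ℕ} (hj : j ∈ F) : 1 ≤ P.rank j := by
  obtain ⟨t, ht⟩ := (P.cover j).1 hj
  rw [rank_eq_of_mem ht]
  omega

theorem m_le_of_rank_eq {P Q : OrdPartition F} (h : P.rank = Q.rank) : P.m ≤ Q.m := by
  rcases Nat.eq_zero_or_pos P.m with h0 | hpos
  · exact h0 ▸ Nat.zero_le _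
  obtain ⟨j, hj⟩ := P.nonempty ⟨0, hpos⟩
  have := rank_eq_of_mem hj
  rw [h] at this
  simpa [this] using Q.rank_le_m j

theorem ext_of_mem_parts_iff {P Q : OrdPartition F} (hm : P.m = Q.m)
    (h : ∀ t j, j ∈ P.parts t ↔ j ∈ Q.parts (Fin.cast hm t)) : P = Q := by
  obtain ⟨m, p, _, _, _⟩ := P
  obtain ⟨m', q, _, _, _⟩ := Q
  obtain rfl : m = m' := hm
  obtain rfl : p = q := funext fun t => Finset.ext (h t)
  rfl

theorem rank_injective : Function.Injective (rank : OrdPartition F → ℕ → ℕ) := by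
  intro P Q h
  have hm : P.m = Q.m := le_antisymm (m_le_of_rank_eq h) (m_le_of_rank_eq h.symm)
  refine ext_of_mem_parts_iff hm fun t j => ?_
  rw [mem_parts_iff_rank_eq, mem_parts_iff_rank_eq, h, Fin.val_cast, ← hm]

instance : Finite (OrdPartition F) :=
  Finite.of_injective
    (fun P (j : F) => (⟨P.rank j, Nat.lt_succ_of_le ((P.rank_le_m j).trans P.m_le_card)⟩ :
      Fin (F.card + 1)))
    fun P Q h => rank_injective <| funext fun j => by
      by_cases hj : j ∈ F
      · simpa using congrFun h ⟨j, hj⟩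
      · rw [P.rank_eq_zero_of_notMem hj, Q.rank_eq_zero_of_notMem hj]

noncomputable def weight (τ : ℕ → ℝ) (P : OrdPartition F) : ℝ :=
  ∑ t : Fin P.m, (∑ j ∈ P.parts t, τ j) * log (P.m - t : ℕ)

theorem weight_eq_sum_rank (τ : ℕ → ℝ) (P : OrdPartition F) :
    P.weight τ = ∑ j ∈ F, τ j * log (P.rank j) := by
  calc P.weight τ = ∑ t, ∑ j ∈ P.parts t, τ j * log (P.rank j) := by
        refine sum_congr rfl fun t _ => ?_
        rw [sum_mul]
        exact sum_congr rfl fun j hj => by rw [rank_eq_of_mem hj]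
    _ = ∑ j ∈ univ.biUnion P.parts, τ j * log (P.rank j) :=
        (sum_biUnion fun a _ b _ hab => P.disj a b hab).symm
    _ = ∑ j ∈ F, τ j * log (P.rank j) := by rw [P.biUnion_parts]

/-- With `τ j = B ^ j` for `B` large, the weight is a base-`B` expansion whose digits are the
numbers `log (rank j)`, which are separated by at least `1 / |F|`. -/
theorem weight_pow_injective {B : ℝ} (hB : (F.card : ℝ) ^ 2 + 1 ≤ B) :
    Function.Injective (weight (F := F) (B ^ ·)) := by
  intro P Q hPQ
  set N := F.card
  have hN : (N : ℝ) ≤ (N : ℝ)⁻¹ * (B - 1) := by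
    rcases (Nat.cast_nonneg N : (0 : ℝ) ≤ N).eq_or_lt with h0 | hpos
    · simp [← h0]
    · rw [le_inv_mul_iff₀ hpos]
      nlinarith
  have hdigits := eq_zero_of_sum_pow_mul_eq_zero (S := F)
    (Δ := fun j => log (P.rank j) - log (Q.rank j)) (by nlinarith [sq_nonneg (N : ℝ)]) hN
    (fun j hj => abs_log_sub_log_le (P.one_le_rank hj) (Q.one_le_rank hj)
      ((P.rank_le_m j).trans P.m_le_card) ((Q.rank_le_m j).trans Q.m_le_card))
    (fun j hj hne => inv_le_abs_log_sub_log (P.one_le_rank hj) (Q.one_le_rank hj)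
      ((P.rank_le_m j).trans P.m_le_card) ((Q.rank_le_m j).trans Q.m_le_card)
      fun h => hne (by simp [h]))
    (by simp_rw [mul_sub, sum_sub_distrib, ← weight_eq_sum_rank, hPQ, sub_self])
  refine rank_injective (funext fun j => ?_)
  by_cases hj : j ∈ F
  · have hpos {R : OrdPartition F} : ((R.rank j : ℕ) : ℝ) ∈ Set.Ioi 0 :=
      Set.mem_Ioi.2 (by exact_mod_cast R.one_le_rank hj)
    exact_mod_cast log_injOn_pos hpos hpos (sub_eq_zero.1 (hdigits j hj))
  · rw [P.rank_eq_zero_of_notMem hj, Q.rank_eq_zero_of_notMem hj]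

theorem one_le_sum_parts {τ : ℕ → ℝ} (hτ : ∀ j, 1 ≤ τ j) (P : OrdPartition F) (t : Fin P.m) :
    1 ≤ ∑ j ∈ P.parts t, τ j := by
  obtain ⟨j, hj⟩ := P.nonempty t
  exact (hτ j).trans (single_le_sum (fun i _ => zero_le_one.trans (hτ i)) hj)

end OrdPartition

theorem stmt9_general (F : Finset ℕ)
    (c : OrdPartition F → ℝ)
    (h : ∀ s : ℕ → ℝ, (∀ j ∈ F, 1 < s j) →
      ∑' P : OrdPartition F, c P * mzeta (fun k : Fin P.m => ∑ j ∈ P.parts k, s j) = 0) :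
    ∀ P : OrdPartition F, c P = 0 := by
  have : Fintype (OrdPartition F) := Fintype.ofFinite _
  set B : ℝ := (F.card : ℝ) ^ 2 + 1
  have hτ (j : ℕ) : 1 ≤ B ^ j := one_le_pow₀ (le_add_of_nonneg_left (sq_nonneg _))
  refine congrFun (eq_zero_of_eventually_sum_mul_eq_zero (OrdPartition.weight_pow_injective le_rfl)
    (fun P => tendsto_mzeta_mul_exp (OrdPartition.one_le_sum_parts hτ P)) ?_)
  filter_upwards [eventually_gt_atTop 1] with σ hσ
  have := h (fun j => σ * B ^ j) fun j _ => one_lt_mul_of_lt_of_le hσ (hτ j)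
  simpa only [tsum_fintype, ← mul_sum] using this

theorem stmt9 (F : Finset ℕ) (hF : F.Nonempty) (hpos : ∀ j ∈ F, 0 < j)
    (c : OrdPartition F → ℝ)
    (h : ∀ s : ℕ → ℝ, (∀ j ∈ F, 1 < s j) →
      ∑' P : OrdPartition F, c P * mzeta (fun k : Fin P.m => ∑ j ∈ P.parts k, s j) = 0) :
    ∀ P : OrdPartition F, c P = 0 :=
  stmt9_general F c h
end

section
/- Let c_1, c_2, c_3 be real numbers such that c_1 ζ(s,t) + c_2 ζ(t,s) + c_3 ζ(s+t) = 0 for all real s > 1 and t > 1. Then c_1 = c_2 = c_3 = 0. -/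
/-! Since the largest index of a term of `ζ(s, t)` is at least `2`, `ζ(s, t) ≤ 2 ^ (2 - s) ζ(2, t)`
decays as `s → ∞`, while `ζ(u) ≥ 1` and `ζ(2, t) ≥ 1/4` stay bounded below. Letting `s = t → ∞`
in the relation forces `c₃ = 0`; then `(s, t) = (2, t)` with `t → ∞` forces `c₁ = 0`, and
`(s, t) = (2, 2)` leaves `c₂ ζ(2, 2) = 0`. -/

open Filter Topology Real

theorem summable_pi_prod_of_nonneg_s10 {n : ℕ} {f : Fin n → ℕ → ℝ} (hf : ∀ j, Summable (f j))
    (hf₀ : ∀ j, 0 ≤ f j) : Summable fun k : Fin n → ℕ => ∏ j, f j (k j) := by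
  induction n with
  | zero => exact .of_finite
  | succ n ih =>
    rw [← (Fin.consEquiv fun _ => ℕ).summable_iff]
    simpa [Function.comp_def, Fin.prod_univ_succ] using
      (hf 0).mul_of_nonneg (ih (fun j => hf j.succ) fun j => hf₀ j.succ) (hf₀ 0)
        fun k => Finset.prod_nonneg fun j _ => hf₀ j.succ (k j)

theorem mzeta_nonneg {n : ℕ} (s : Fin n → ℝ) : 0 ≤ mzeta s :=
  tsum_nonneg fun _ => Finset.prod_nonneg fun _ _ => rpow_nonneg (Nat.cast_nonneg _) _

theorem summable_mzeta {n : ℕ} {s : Fin n → ℝ} (hs : ∀ j, 1 < s j) :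
    Summable fun k : {k : Fin n → ℕ // (∀ i j : Fin n, i < j → k j < k i) ∧ ∀ i, 0 < k i} =>
      ∏ j, (k.1 j : ℝ) ^ (-(s j)) :=
  (summable_pi_prod_of_nonneg_s10 (fun j => summable_nat_rpow.2 (neg_lt_neg (hs j)))
    fun _ _ => rpow_nonneg (Nat.cast_nonneg _) _).subtype _

theorem prod_rpow_le_mzeta {n : ℕ} {s : Fin n → ℝ} (hs : ∀ j, 1 < s j) {k : Fin n → ℕ}
    (hk : StrictAnti k) (hk₀ : ∀ i, 0 < k i) : ∏ j, (k j : ℝ) ^ (-(s j)) ≤ mzeta s :=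
  (summable_mzeta hs).le_tsum ⟨k, hk, hk₀⟩ fun _ _ =>
    Finset.prod_nonneg fun _ _ => rpow_nonneg (Nat.cast_nonneg _) _

theorem one_le_mzeta_one {u : ℝ} (hu : 1 < u) : 1 ≤ mzeta ![u] := by
  simpa using prod_rpow_le_mzeta (s := ![u]) (k := ![1]) (by simpa) (Subsingleton.strictAnti _)
    (by simp)

theorem quarter_le_mzeta_two_left {t : ℝ} (ht : 1 < t) : 1 / 4 ≤ mzeta ![2, t] := by
  have h := prod_rpow_le_mzeta (s := ![2, t]) (k := ![2, 1])
    (by simp [Fin.forall_fin_two, ht]) (by decide) (by simp [Fin.forall_fin_two])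
  norm_num [Fin.prod_univ_two] at h
  exact h

theorem mzeta_two_le {s₀ t₀ s t : ℝ} (hs₀ : 1 < s₀) (ht₀ : 1 < t₀) (hs : s₀ ≤ s) (ht : t₀ ≤ t) :
    mzeta ![s, t] ≤ 2 ^ (s₀ - s) * mzeta ![s₀, t₀] := by
  rw [mzeta, mzeta, ← tsum_mul_left]
  refine (summable_mzeta (s := ![s, t]) ?_).tsum_le_tsum (fun ⟨k, hk, hk₀⟩ => ?_)
    ((summable_mzeta (s := ![s₀, t₀]) ?_).mul_left _)
  · simp only [Fin.forall_fin_two, Matrix.cons_val_zero, Matrix.cons_val_one]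
    exact ⟨by linarith, by linarith⟩
  · have hk₁ : (1 : ℝ) ≤ k 1 := by exact_mod_cast hk₀ 1
    have hk₂ : (2 : ℝ) ≤ k 0 := by
      have : 2 ≤ k 0 := Nat.lt_of_le_of_lt (hk₀ 1) (hk 0 1 Fin.zero_lt_one)
      exact_mod_cast this
    have hfirst : (k 0 : ℝ) ^ (-s) ≤ 2 ^ (s₀ - s) * (k 0 : ℝ) ^ (-s₀) := calc
      (k 0 : ℝ) ^ (-s) = (k 0 : ℝ) ^ (s₀ - s) * (k 0 : ℝ) ^ (-s₀) := by
        rw [← rpow_add (by linarith)]; ring_nf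
      _ ≤ 2 ^ (s₀ - s) * (k 0 : ℝ) ^ (-s₀) := by
        have := rpow_le_rpow_of_nonpos two_pos hk₂ (by linarith : s₀ - s ≤ 0)
        gcongr
    have hsecond : (k 1 : ℝ) ^ (-t) ≤ (k 1 : ℝ) ^ (-t₀) :=
      rpow_le_rpow_of_exponent_le hk₁ (by linarith)
    simp only [Fin.prod_univ_two, Matrix.cons_val_zero, Matrix.cons_val_one]
    calc (k 0 : ℝ) ^ (-s) * (k 1 : ℝ) ^ (-t)
        ≤ 2 ^ (s₀ - s) * (k 0 : ℝ) ^ (-s₀) * (k 1 : ℝ) ^ (-t₀) := by gcongr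
      _ = _ := mul_assoc _ _ _
  · simp [Fin.forall_fin_two, hs₀, ht₀]

theorem tendsto_mzeta_two_atTop {t : ℝ → ℝ} {t₀ : ℝ} (ht₀ : 1 < t₀)
    (ht : ∀ᶠ x in atTop, t₀ ≤ t x) : Tendsto (fun x => mzeta ![x, t x]) atTop (𝓝 0) := by
  have hdecay : Tendsto (fun x : ℝ => (2 : ℝ) ^ (2 - x) * mzeta ![2, t₀]) atTop (𝓝 0) := by
    have hexp : Tendsto (fun x : ℝ => 2 - x) atTop atBot := by
      simpa only [sub_eq_add_neg] using
        tendsto_atBot_add_const_left atTop (2 : ℝ) (tendsto_neg_atTop_atBot (G := ℝ))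
    simpa using ((tendsto_rpow_atBot_of_base_gt_one 2 one_lt_two).comp hexp).mul_const
      (mzeta ![2, t₀])
  refine tendsto_of_tendsto_of_tendsto_of_le_of_le' tendsto_const_nhds hdecay
    (.of_forall fun x => mzeta_nonneg _) ?_
  filter_upwards [ht, eventually_ge_atTop 2] with x htx hx
  exact mzeta_two_le one_lt_two ht₀ hx htx

theorem eq_zero_of_tendsto_mul_zero {α : Type*} {l : Filter α} [l.NeBot] {c m : ℝ} {a : α → ℝ}
    (hm : 0 < m) (ha : ∀ᶠ x in l, m ≤ a x) (h : Tendsto (fun x => c * a x) l (𝓝 0)) :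
    c = 0 := by
  have hbound : ∀ᶠ x in l, |c| * m ≤ |c * a x| := ha.mono fun x hx => by
    rw [abs_mul, abs_of_pos (hm.trans_le hx)]; gcongr
  have : |c| * m ≤ 0 := by simpa using ge_of_tendsto h.abs hbound
  exact abs_nonpos_iff.1 (nonpos_of_mul_nonpos_left this hm)

theorem stmt10 (c₁ c₂ c₃ : ℝ)
    (h : ∀ s t : ℝ, 1 < s → 1 < t →
      c₁ * mzeta ![s, t] + c₂ * mzeta ![t, s] + c₃ * mzeta ![s + t] = 0) :
    c₁ = 0 ∧ c₂ = 0 ∧ c₃ = 0 := by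
  have hc₃ : c₃ = 0 := by
    have hlim : Tendsto (fun x => c₃ * mzeta ![x + x]) atTop (𝓝 0) := by
      have hdiag := (tendsto_mzeta_two_atTop one_lt_two (eventually_ge_atTop 2)).const_mul
        (-(c₁ + c₂))
      rw [mul_zero] at hdiag
      refine hdiag.congr' ?_
      filter_upwards [eventually_gt_atTop 1] with x hx
      linear_combination -h x x hx hx
    exact eq_zero_of_tendsto_mul_zero one_pos
      (eventually_gt_atTop 1 |>.mono fun x hx => one_le_mzeta_one (by linarith)) hlim
  have hc₁ : c₁ = 0 := by
    have hlim : Tendsto (fun x => c₁ * mzeta ![2, x]) atTop (𝓝 0) := by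
      have hright := (tendsto_mzeta_two_atTop one_lt_two (.of_forall fun _ => le_rfl)).const_mul
        (-c₂)
      rw [mul_zero] at hright
      refine hright.congr' ?_
      filter_upwards [eventually_gt_atTop 1] with x hx
      linear_combination -h 2 x one_lt_two hx + mzeta ![2 + x] * hc₃
    exact eq_zero_of_tendsto_mul_zero (by norm_num)
      (eventually_gt_atTop 1 |>.mono fun x hx => quarter_le_mzeta_two_left hx) hlim
  have hc₂ : c₂ = 0 := by
    have hpos : 0 < mzeta ![(2 : ℝ), 2] := by
      linarith [quarter_le_mzeta_two_left one_lt_two]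
    simpa [hc₁, hc₃, hpos.ne'] using h 2 2 one_lt_two one_lt_two
  exact ⟨hc₁, hc₂, hc₃⟩
end

section
/- Let c_1, c_2, c_3 be real numbers such that c_1/((x−1)(xy−1)) + c_2/((y−1)(xy−1)) + c_3/(xy−1) = 0 for all real x > 1 and y > 1. Then c_1 = c_2 = c_3 = 0. -/
theorem stmt11 (c₁ c₂ c₃ : ℝ)
    (h : ∀ x y : ℝ, 1 < x → 1 < y →
      c₁ / ((x - 1) * (x * y - 1)) + c₂ / ((y - 1) * (x * y - 1)) + c₃ / (x * y - 1) = 0) :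
    c₁ = 0 ∧ c₂ = 0 ∧ c₃ = 0 := by
  -- At (2, 2), (2, 3) and (3, 2) the identity is an invertible linear system in c₁, c₂, c₃.
  have h₂₂ := h 2 2 (by norm_num) (by norm_num)
  have h₂₃ := h 2 3 (by norm_num) (by norm_num)
  have h₃₂ := h 3 2 (by norm_num) (by norm_num)
  norm_num at h₂₂ h₂₃ h₃₂
  refine ⟨?_, ?_, ?_⟩ <;> linarith
end

section
/- Let c_1, ..., c_13 be real numbers such that for all real x > 1, y > 1, z > 1, c_1/((x−1)(xy−1)(xyz−1)) + c_2/((x−1)(xz−1)(xyz−1)) + c_3/((y−1)(xy−1)(xyz−1)) + c_4/((y−1)(yz−1)(xyz−1)) + c_5/((z−1)(xz−1)(xyz−1)) + c_6/((z−1)(yz−1)(xyz−1)) + c_7/((x−1)(xyz−1)) + c_8/((yz−1)(xyz−1)) + c_9/((y−1)(xyz−1)) + c_10/((xz−1)(xyz−1)) + c_11/((z−1)(xyz−1)) + c_12/((xy−1)(xyz−1)) + c_13/(xyz−1) = 0. Then c_h = 0 for all 1 ≤ h ≤ 13. -/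
/-!
Multiplying by `x - 1` and letting `x → 1⁺` leaves `(c₁/(y-1) + c₂/(z-1) + c₇)/(yz-1)`, which
must then vanish for all `y, z > 1`; this forces `c₁ = c₂ = c₇ = 0`. Permuting `x, y, z` permutes
the thirteen terms, so the poles along `y = 1` and `z = 1` kill `c₃, c₄, c₉` and `c₅, c₆, c₁₁`.
What remains, `(c₈/(yz-1) + c₁₀/(xz-1) + c₁₂/(xy-1) + c₁₃)/(xyz-1)`, vanishes at four points
that pin down the last four coefficients.
-/

open Filter Topology

theorem eq_zero_of_forall_gt_div_sub_add_eq_zero {f g : ℝ → ℝ} {a : ℝ}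
    (hf : ContinuousAt f a) (hg : ContinuousAt g a)
    (h : ∀ x, a < x → f x / (x - a) + g x = 0) : f a = 0 := by
  have hcont : ContinuousAt (fun x => f x + (x - a) * g x) a := by fun_prop
  have hzero : (fun x => f x + (x - a) * g x) =ᶠ[𝓝[>] a] fun _ => 0 := by
    filter_upwards [self_mem_nhdsWithin] with x hx
    have hxa : x - a ≠ 0 := sub_ne_zero.mpr (ne_of_gt hx)
    rw [← mul_div_cancel₀ (f x) hxa, ← mul_add, h x hx, mul_zero]
  simpa using tendsto_nhds_unique (hcont.tendsto.mono_left nhdsWithin_le_nhds)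
    (tendsto_const_nhds.congr' hzero.symm)

theorem eq_zero_of_forall_div_add_div_add_eq_zero {a b c : ℝ}
    (h : ∀ y z : ℝ, 1 < y → 1 < z → a / (y - 1) + b / (z - 1) + c = 0) :
    a = 0 ∧ b = 0 ∧ c = 0 := by
  have h₂₂ := h 2 2 (by norm_num) (by norm_num)
  have h₂₃ := h 2 3 (by norm_num) (by norm_num)
  have h₃₂ := h 3 2 (by norm_num) (by norm_num)
  norm_num at h₂₂ h₂₃ h₃₂
  exact ⟨by linarith, by linarith, by linarith⟩

noncomputable def mzvRationalSum (c₁ c₂ c₃ c₄ c₅ c₆ c₇ c₈ c₉ c₁₀ c₁₁ c₁₂ c₁₃ x y z : ℝ) : ℝ :=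
  c₁ / ((x - 1) * (x * y - 1) * (x * y * z - 1))
    + c₂ / ((x - 1) * (x * z - 1) * (x * y * z - 1))
    + c₃ / ((y - 1) * (x * y - 1) * (x * y * z - 1))
    + c₄ / ((y - 1) * (y * z - 1) * (x * y * z - 1))
    + c₅ / ((z - 1) * (x * z - 1) * (x * y * z - 1))
    + c₆ / ((z - 1) * (y * z - 1) * (x * y * z - 1))
    + c₇ / ((x - 1) * (x * y * z - 1))
    + c₈ / ((y * z - 1) * (x * y * z - 1))
    + c₉ / ((y - 1) * (x * y * z - 1))
    + c₁₀ / ((x * z - 1) * (x * y * z - 1))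
    + c₁₁ / ((z - 1) * (x * y * z - 1))
    + c₁₂ / ((x * y - 1) * (x * y * z - 1))
    + c₁₃ / (x * y * z - 1)

section

variable {c₁ c₂ c₃ c₄ c₅ c₆ c₇ c₈ c₉ c₁₀ c₁₁ c₁₂ c₁₃ : ℝ}

theorem mzvRationalSum_swap_xy (x y z : ℝ) :
    mzvRationalSum c₁ c₂ c₃ c₄ c₅ c₆ c₇ c₈ c₉ c₁₀ c₁₁ c₁₂ c₁₃ x y z
      = mzvRationalSum c₃ c₄ c₁ c₂ c₆ c₅ c₉ c₁₀ c₇ c₈ c₁₁ c₁₂ c₁₃ y x z := by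
  unfold mzvRationalSum
  ring

theorem mzvRationalSum_swap_xz (x y z : ℝ) :
    mzvRationalSum c₁ c₂ c₃ c₄ c₅ c₆ c₇ c₈ c₉ c₁₀ c₁₁ c₁₂ c₁₃ x y z
      = mzvRationalSum c₆ c₅ c₄ c₃ c₂ c₁ c₁₁ c₁₂ c₉ c₁₀ c₇ c₈ c₁₃ z y x := by
  unfold mzvRationalSum
  ring

theorem mzvRationalSum_residue_x_eq_zero {y z : ℝ} (hy : 1 < y) (hz : 1 < z)
    (h : ∀ x, 1 < x → mzvRationalSum c₁ c₂ c₃ c₄ c₅ c₆ c₇ c₈ c₉ c₁₀ c₁₁ c₁₂ c₁₃ x y z = 0) :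
    c₁ / (y - 1) + c₂ / (z - 1) + c₇ = 0 := by
  have hy₁ : y - 1 ≠ 0 := by linarith
  have hz₁ : z - 1 ≠ 0 := by linarith
  have hyz₁ : y * z - 1 ≠ 0 := by nlinarith
  have hres := eq_zero_of_forall_gt_div_sub_add_eq_zero (a := 1)
    (f := fun x => (c₁ / (x * y - 1) + c₂ / (x * z - 1) + c₇) / (x * y * z - 1))
    (g := fun x => ((c₃ / (x * y - 1) + c₄ / (y * z - 1) + c₉) / (y - 1)
      + (c₅ / (x * z - 1) + c₆ / (y * z - 1) + c₁₁) / (z - 1)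
      + c₈ / (y * z - 1) + c₁₀ / (x * z - 1) + c₁₂ / (x * y - 1) + c₁₃) / (x * y * z - 1))
    (by fun_prop (disch := simpa only [one_mul]))
    (by fun_prop (disch := simpa only [one_mul]))
    (fun x hx => by
      rw [← h x hx, mzvRationalSum]
      simp only [div_eq_mul_inv, mul_inv]
      ring)
  simpa [hyz₁] using hres

theorem x_pole_coeffs_eq_zero_of_mzvRationalSum_eq_zero
    (h : ∀ x y z, 1 < x → 1 < y → 1 < z →
      mzvRationalSum c₁ c₂ c₃ c₄ c₅ c₆ c₇ c₈ c₉ c₁₀ c₁₁ c₁₂ c₁₃ x y z = 0) :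
    c₁ = 0 ∧ c₂ = 0 ∧ c₇ = 0 :=
  eq_zero_of_forall_div_add_div_add_eq_zero fun _ _ hy hz =>
    mzvRationalSum_residue_x_eq_zero hy hz fun x hx => h x _ _ hx hy hz

end

theorem pole_free_coeffs_eq_zero_of_mzvRationalSum_eq_zero {c₈ c₁₀ c₁₂ c₁₃ : ℝ}
    (h : ∀ x y z, 1 < x → 1 < y → 1 < z →
      mzvRationalSum 0 0 0 0 0 0 0 c₈ 0 c₁₀ 0 c₁₂ c₁₃ x y z = 0) :
    c₈ = 0 ∧ c₁₀ = 0 ∧ c₁₂ = 0 ∧ c₁₃ = 0 := by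
  have h₂₂₂ := h 2 2 2 (by norm_num) (by norm_num) (by norm_num)
  have h₃₂₂ := h 3 2 2 (by norm_num) (by norm_num) (by norm_num)
  have h₂₃₂ := h 2 3 2 (by norm_num) (by norm_num) (by norm_num)
  have h₂₂₃ := h 2 2 3 (by norm_num) (by norm_num) (by norm_num)
  norm_num [mzvRationalSum] at h₂₂₂ h₃₂₂ h₂₃₂ h₂₂₃
  exact ⟨by linarith, by linarith, by linarith, by linarith⟩

theorem stmt13 (c₁ c₂ c₃ c₄ c₅ c₆ c₇ c₈ c₉ c₁₀ c₁₁ c₁₂ c₁₃ : ℝ)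
    (h : ∀ x y z : ℝ, 1 < x → 1 < y → 1 < z →
      c₁ / ((x - 1) * (x * y - 1) * (x * y * z - 1))
        + c₂ / ((x - 1) * (x * z - 1) * (x * y * z - 1))
        + c₃ / ((y - 1) * (x * y - 1) * (x * y * z - 1))
        + c₄ / ((y - 1) * (y * z - 1) * (x * y * z - 1))
        + c₅ / ((z - 1) * (x * z - 1) * (x * y * z - 1))
        + c₆ / ((z - 1) * (y * z - 1) * (x * y * z - 1))
        + c₇ / ((x - 1) * (x * y * z - 1))
        + c₈ / ((y * z - 1) * (x * y * z - 1))
        + c₉ / ((y - 1) * (x * y * z - 1))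
        + c₁₀ / ((x * z - 1) * (x * y * z - 1))
        + c₁₁ / ((z - 1) * (x * y * z - 1))
        + c₁₂ / ((x * y - 1) * (x * y * z - 1))
        + c₁₃ / (x * y * z - 1) = 0) :
    c₁ = 0 ∧ c₂ = 0 ∧ c₃ = 0 ∧ c₄ = 0 ∧ c₅ = 0 ∧ c₆ = 0 ∧ c₇ = 0 ∧ c₈ = 0 ∧ c₉ = 0
      ∧ c₁₀ = 0 ∧ c₁₁ = 0 ∧ c₁₂ = 0 ∧ c₁₃ = 0 := by
  obtain ⟨rfl, rfl, rfl⟩ := x_pole_coeffs_eq_zero_of_mzvRationalSum_eq_zero h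
  obtain ⟨rfl, rfl, rfl⟩ := x_pole_coeffs_eq_zero_of_mzvRationalSum_eq_zero
    fun x y z hx hy hz => (mzvRationalSum_swap_xy x y z).trans (h y x z hy hx hz)
  obtain ⟨rfl, rfl, rfl⟩ := x_pole_coeffs_eq_zero_of_mzvRationalSum_eq_zero
    fun x y z hx hy hz => (mzvRationalSum_swap_xz x y z).trans (h z y x hz hy hx)
  obtain ⟨rfl, rfl, rfl, rfl⟩ := pole_free_coeffs_eq_zero_of_mzvRationalSum_eq_zero h
  simp
end

section
/- Let n be a positive integer and let x_1, ..., x_n be real numbers each exceeding 1. Then ∑_{σ ∈ S_n} ∏_{k=1}^n (∏_{j=1}^k x_{σ(j)} − 1)^{-1} = ∑_{𝒫 ⊢ {1,...,n}} (−1)^{n − |𝒫|} ∏_{P ∈ 𝒫} (|P| − 1)! (∏_{j ∈ P} x_j − 1)^{-1}, where S_n is the group of permutations of {1, ..., n} and the sum on the right is over all unordered set partitions 𝒫 of {1, ..., n}. -/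
/-!
Write `y Q = ∏ j ∈ Q, x j - 1`. Both sides make sense for any finite index set `s`, and both
satisfy `F ∅ = 1` and `y s * F s = ∑ i ∈ s, F (s.erase i)`. For the sum over orderings this is
splitting off the first element. For the sum over partitions, multiply by
`∏ j ∈ s, x j = ∏ Q ∈ P.parts, (1 + y Q)` and expand: the exponential formula for set partitions
turns the result into `∑ u ⊆ s, M u * F (s \ u)`, where `M u`, the sum over partitions of `u` of
`∏ (-1) ^ (#Q - 1) * (#Q - 1)!`, vanishes unless `#u ≤ 1` (the combinatorial form of
`exp (log (1 + t)) = 1 + t`).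
-/

open Finset

namespace Finpartition

variable {ι : Type*} [DecidableEq ι] {s : Finset ι}

lemma sup_parts_sdiff (P : Finpartition s) {T : Finset (Finset ι)} (hT : T ⊆ P.parts) :
    (P.parts \ T).sup id = s \ T.sup id := by
  ext j
  simp only [mem_sup, mem_sdiff, id]
  constructor
  · rintro ⟨Q, ⟨hQ, hQT⟩, hjQ⟩
    refine ⟨P.le hQ hjQ, fun ⟨Q', hQ', hjQ'⟩ => hQT ?_⟩
    rwa [P.eq_of_mem_parts hQ (hT hQ') hjQ hjQ']
  · rintro ⟨hjs, hjT⟩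
    obtain ⟨Q, hQ, hjQ⟩ := P.exists_mem hjs
    exact ⟨Q, ⟨hQ, fun hQT => hjT ⟨Q, hQT, hjQ⟩⟩, hjQ⟩

lemma prod_prod_parts {M : Type*} [CommMonoid M] (P : Finpartition s) (f : ι → M) :
    ∏ Q ∈ P.parts, ∏ j ∈ Q, f j = ∏ j ∈ s, f j := by
  conv_rhs => rw [← P.biUnion_parts]
  exact (prod_biUnion P.disjoint).symm

@[simps]
def glue {u : Finset ι} (hu : u ⊆ s) (P : Finpartition u) (P' : Finpartition (s \ u)) :
    Finpartition s where
  parts := P.parts ∪ P'.parts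
  supIndep := by
    rw [supIndep_iff_pairwiseDisjoint, coe_union]
    exact P.disjoint.union P'.disjoint fun Q hQ Q' hQ' _ =>
      disjoint_sdiff.mono (P.le hQ) (P'.le hQ')
  sup_parts := by
    rw [sup_union, P.sup_parts, P'.sup_parts, sup_eq_union, union_sdiff_of_subset hu]
  bot_notMem h := (mem_union.1 h).elim P.bot_notMem P'.bot_notMem

lemma sum_empty {M : Type*} [AddCommMonoid M] (g : Finset (Finset ι) → M) :
    ∑ P : Finpartition (∅ : Finset ι), g P.parts = g ∅ :=
  Fintype.sum_unique (ι := Finpartition (⊥ : Finset ι)) _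

lemma sum_sum_powerset_parts {M : Type*} [AddCommMonoid M]
    (f : Finset (Finset ι) → Finset (Finset ι) → M) :
    ∑ P : Finpartition s, ∑ T ∈ P.parts.powerset, f T (P.parts \ T) =
      ∑ u ∈ s.powerset, ∑ P : Finpartition u, ∑ P' : Finpartition (s \ u),
        f P.parts P'.parts := by
  have sup_mem (P : Finpartition s) : ∀ T ∈ P.parts.powerset, T.sup id ∈ s.powerset :=
    fun T hT => mem_powerset.2 <| Finset.sup_le fun Q hQ => P.le (mem_powerset.1 hT hQ)
  simp_rw [← sum_fiberwise_of_maps_to (sup_mem _)]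
  rw [sum_comm]
  refine sum_congr rfl fun u hu => ?_
  rw [sum_sigma', ← Fintype.sum_prod_type']
  have mem {p : Σ _ : Finpartition s, Finset (Finset ι)}
      (hp : p ∈ univ.sigma fun P => {T ∈ P.parts.powerset | T.sup id = u}) :
      p.2 ⊆ p.1.parts ∧ p.2.sup id = u := by
    simpa using hp
  refine sum_bij'
    (fun p hp => (p.1.ofSubset (mem hp).1 (mem hp).2,
      p.1.ofSubset sdiff_subset (by rw [sup_parts_sdiff _ (mem hp).1, (mem hp).2])))
    (fun q _ => ⟨glue (mem_powerset.1 hu) q.1 q.2, q.1.parts⟩) ?_ ?_ ?_ ?_ ?_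
  · simp
  · rintro ⟨P, P'⟩ -
    simp only [mem_sigma, mem_univ, mem_filter, mem_powerset, glue_parts, true_and]
    exact ⟨subset_union_left, P.sup_parts⟩
  · rintro ⟨P, T⟩ hp
    exact Sigma.ext (Finpartition.ext (union_sdiff_of_subset (mem hp).1)) HEq.rfl
  · rintro ⟨P, P'⟩ -
    refine Prod.ext (Finpartition.ext rfl) (Finpartition.ext ?_)
    refine union_sdiff_cancel_left (disjoint_left.2 fun Q hQ hQ' => ?_)
    obtain ⟨j, hj⟩ := P.nonempty_of_mem_parts hQ
    exact (mem_sdiff.1 (P'.le hQ' hj)).2 (P.le hQ hj)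
  · rintro ⟨P, T⟩ -
    rfl

lemma sum_prod_add {R : Type*} [CommSemiring R] (g h : Finset ι → R) :
    ∑ P : Finpartition s, ∏ Q ∈ P.parts, (g Q + h Q) =
      ∑ u ∈ s.powerset, (∑ P : Finpartition u, ∏ Q ∈ P.parts, g Q) *
        ∑ P : Finpartition (s \ u), ∏ Q ∈ P.parts, h Q := by
  simp_rw [prod_add, sum_mul_sum]
  exact sum_sum_powerset_parts fun T T' => (∏ Q ∈ T, g Q) * ∏ Q ∈ T', h Q

lemma sum_eq_sum_powerset_erase {M : Type*} [AddCommMonoid M] {i : ι} (hi : i ∈ s)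
    (g : Finset (Finset ι) → M) :
    ∑ P : Finpartition s, g P.parts =
      ∑ u ∈ (s.erase i).powerset, ∑ P : Finpartition u, g (insert (s \ u) P.parts) := by
  have sdiff_mem (P : Finpartition s) : s \ P.part i ∈ (s.erase i).powerset := by
    simp only [mem_powerset, subset_iff, mem_sdiff, mem_erase, and_imp]
    exact fun j hj hjP => ⟨by rintro rfl; exact hjP (P.mem_part_self.2 hi), hj⟩
  rw [← sum_fiberwise_of_maps_to fun P _ => sdiff_mem P]
  refine sum_congr rfl fun u hu => ?_
  have hu : u ⊆ s.erase i := mem_powerset.1 hu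
  have hus : u ⊆ s := hu.trans (erase_subset _ _)
  have hiu : i ∈ s \ u := mem_sdiff.2 ⟨hi, fun h => (mem_erase.1 (hu h)).1 rfl⟩
  have insert_erase_part {P : Finpartition s} (hP : s \ P.part i = u) :
      insert (s \ u) (P.parts.erase (P.part i)) = P.parts := by
    rw [← hP, Finset.sdiff_sdiff_eq_self (P.part_subset i), insert_erase (P.part_mem.2 hi)]
  have sup_erase {P : Finpartition s} (hP : s \ P.part i = u) :
      (P.parts.erase (P.part i)).sup id = u := by
    rw [erase_eq, sup_parts_sdiff _ (singleton_subset_iff.2 (P.part_mem.2 hi)), sup_singleton,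
      id, hP]
  have part_extend (P : Finpartition u) : (P.extend (ne_empty_of_mem hiu) disjoint_sdiff
      (union_sdiff_of_subset hus)).part i = s \ u :=
    Finpartition.part_eq_of_mem _ (mem_insert_self _ _) hiu
  refine sum_bij' (fun P hP => P.ofSubset (erase_subset _ _) (sup_erase (mem_filter.1 hP).2))
    (fun P _ => P.extend (ne_empty_of_mem hiu) disjoint_sdiff (union_sdiff_of_subset hus))
    ?_ ?_ ?_ ?_ ?_
  · simp
  · intro P _
    simp [part_extend, Finset.sdiff_sdiff_eq_self hus]
  · intro P hP
    exact Finpartition.ext (insert_erase_part (mem_filter.1 hP).2)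
  · intro P _
    ext1
    simp only [ofSubset_parts, extend_parts, part_extend]
    exact erase_insert fun h => (mem_sdiff.1 hiu).2 (P.le h hiu)
  · intro P hP
    exact congrArg g (insert_erase_part (mem_filter.1 hP).2).symm

lemma sum_card_sub_one (P : Finpartition s) : ∑ Q ∈ P.parts, (#Q - 1) = #s - #P.parts := by
  rw [sum_tsub_distrib _ fun Q hQ => card_pos.2 (P.nonempty_of_mem_parts hQ), P.sum_card_parts,
    ← card_eq_sum_ones]

end Finpartition

namespace Finset

variable {ι : Type*}

def orderings (s : Finset ι) : Finset (List ι) :=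
  ⟨s.val.lists, Multiset.lists_nodup_finset s⟩

lemma mem_orderings {s : Finset ι} {l : List ι} : l ∈ orderings s ↔ s.val = l :=
  Multiset.mem_lists_iff _ _

lemma orderings_empty : orderings (∅ : Finset ι) = {[]} := by
  ext l
  simp [mem_orderings, eq_comm]

lemma prod_map_of_mem_orderings {M : Type*} [CommMonoid M] {s : Finset ι} {l : List ι}
    (hl : l ∈ orderings s) (f : ι → M) : (l.map f).prod = ∏ j ∈ s, f j := by
  rw [prod_eq_multiset_prod, mem_orderings.1 hl, Multiset.map_coe, Multiset.prod_coe]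

lemma sum_orderings_reverse {M : Type*} [AddCommMonoid M] (s : Finset ι) (f : List ι → M) :
    ∑ l ∈ orderings s, f l.reverse = ∑ l ∈ orderings s, f l :=
  sum_nbij' List.reverse List.reverse (by simp [mem_orderings]) (by simp [mem_orderings])
    (by simp) (by simp) (fun _ _ => rfl)

variable [DecidableEq ι]

lemma cons_mem_orderings {s : Finset ι} {i : ι} {t : List ι} :
    i :: t ∈ orderings s ↔ i ∈ s ∧ t ∈ orderings (s.erase i) := by
  simp only [mem_orderings, erase_val, ← Multiset.cons_coe]
  constructor
  · intro h
    exact ⟨by simp [← mem_val, h], by simp [h]⟩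
  · rintro ⟨hi, ht⟩
    rw [← ht, Multiset.cons_erase hi]

lemma sum_orderings_eq_sum_sum_cons {M : Type*} [AddCommMonoid M] {s : Finset ι}
    (hs : s.Nonempty) (f : List ι → M) :
    ∑ l ∈ orderings s, f l = ∑ i ∈ s, ∑ t ∈ orderings (s.erase i), f (i :: t) := by
  rw [sum_sigma']
  refine (sum_nbij (fun p : Σ _ : ι, List ι => p.1 :: p.2)
    (fun p hp => cons_mem_orderings.2 (mem_sigma.1 hp))
    (fun p _ q _ h => Sigma.ext (List.cons.inj h).1 (heq_of_eq (List.cons.inj h).2))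
    (fun l hl => ?_) fun _ _ => rfl).symm
  obtain ⟨i, t, rfl⟩ := List.exists_cons_of_ne_nil fun h : l = [] =>
    hs.ne_empty (val_eq_zero.1 (by simpa [h] using mem_orderings.1 hl))
  exact ⟨⟨i, t⟩, mem_sigma.2 (cons_mem_orderings.1 hl), rfl⟩

lemma sum_powerset_ite_card_le_one {M : Type*} [AddCommMonoid M]
    (t : Finset ι) (g : Finset ι → M) :
    ∑ u ∈ t.powerset, (if #u ≤ 1 then g u else 0) = g ∅ + ∑ j ∈ t, g {j} := by
  rw [← sum_filter]
  have card_le_one :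
      {u ∈ t.powerset | #u ≤ 1} = insert ∅ (t.map ⟨singleton, singleton_injective⟩) := by
    ext u
    simp only [mem_filter, mem_powerset, mem_insert, mem_map, Function.Embedding.coeFn_mk]
    rw [Nat.le_one_iff_eq_zero_or_eq_one, card_eq_zero, card_eq_one]
    constructor
    · rintro ⟨hut, rfl | ⟨a, rfl⟩⟩
      exacts [Or.inl rfl, Or.inr ⟨a, singleton_subset_iff.1 hut, rfl⟩]
    · rintro (rfl | ⟨a, ha, rfl⟩)
      exacts [⟨empty_subset _, Or.inl rfl⟩,
        ⟨singleton_subset_iff.2 ha, Or.inr ⟨a, rfl⟩⟩]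
  rw [card_le_one, sum_insert (by simp), sum_map]
  rfl

end Finset

lemma sum_perm_ofFn_eq_sum_orderings {n : ℕ} {M : Type*} [AddCommMonoid M] (f : List (Fin n) → M) :
    ∑ σ : Equiv.Perm (Fin n), f (List.ofFn σ) = ∑ l ∈ orderings univ, f l := by
  refine sum_nbij (fun σ => List.ofFn σ) (fun σ _ => ?_)
    (fun σ _ τ _ h => Equiv.coe_fn_injective (List.ofFn_injective h)) (fun l hl => ?_)
    fun _ _ => rfl
  · rw [mem_orderings, ← Fin.univ_val_map, Multiset.map_univ_val_equiv]
  have hl : (univ : Finset (Fin n)).val = l := mem_orderings.1 hl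
  have hnd : l.Nodup := Multiset.coe_nodup.1 (hl ▸ univ.nodup)
  have hlen : l.length = n := by simpa using (congrArg Multiset.card hl).symm
  refine ⟨(finCongr hlen.symm).trans (hnd.getEquivOfForallMemList l fun j => ?_),
    mem_coe.2 (mem_univ _), ?_⟩
  · simpa using congrArg (j ∈ ·) hl
  · apply List.ext_getElem (by simp [hlen])
    simp

section HoffmanIdentity

variable {ι : Type*} {K : Type*} [Field K]

def tailsTerm (x : ι → K) : List ι → K
  | [] => 1
  | i :: t => (((i :: t).map x).prod - 1)⁻¹ * tailsTerm x t

lemma prod_Iic_eq_tailsTerm_reverse (x : ι → K) :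
    ∀ {m : ℕ} (g : Fin m → ι),
      ∏ k, (∏ j ∈ Iic k, x (g j) - 1)⁻¹ = tailsTerm x (List.ofFn g).reverse
  | 0, g => by simp [tailsTerm]
  | m + 1, g => by
    have Iic_last : Iic (Fin.last m) = univ := eq_univ_of_forall fun j => mem_Iic.2 j.le_last
    simp_rw [Fin.prod_univ_castSucc (n := m), Iic_last, Fin.prod_Iic_castSucc,
      prod_Iic_eq_tailsTerm_reverse x (fun j => g j.castSucc), List.ofFn_succ',
      List.concat_eq_append, List.reverse_append]
    simp [tailsTerm, List.prod_ofFn, Fin.prod_univ_castSucc, mul_comm]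

/-- `μ(0̂, 1̂)` in the lattice of partitions of `Q`. -/
def mobiusWeight {R : Type*} [CommRing R] (Q : Finset ι) : R :=
  (-1) ^ (#Q - 1) * (#Q - 1).factorial

variable [DecidableEq ι]

lemma sum_prod_mobiusWeight {R : Type*} [CommRing R] (s : Finset ι) :
    ∑ P : Finpartition s, ∏ Q ∈ P.parts, (mobiusWeight Q : R) = if #s ≤ 1 then 1 else 0 := by
  induction s using Finset.strongInduction with
  | H s ih =>
  obtain rfl | ⟨i, hi⟩ := s.eq_empty_or_nonempty
  · exact (Finpartition.sum_empty fun T => ∏ Q ∈ T, (mobiusWeight Q : R)).trans (by simp)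
  have sum_insert_block (u) (hu : u ∈ (s.erase i).powerset) :
      ∑ P : Finpartition u, ∏ Q ∈ insert (s \ u) P.parts, (mobiusWeight Q : R) =
        if #u ≤ 1 then mobiusWeight (s \ u) else 0 := by
    have hu : u ⊆ s.erase i := mem_powerset.1 hu
    have hiu : i ∈ s \ u := mem_sdiff.2 ⟨hi, fun h => (mem_erase.1 (hu h)).1 rfl⟩
    have hus : u ⊂ s := Finset.ssubset_of_subset_of_ssubset hu (erase_ssubset hi)
    simp_rw [prod_insert fun h : s \ u ∈ _ => (mem_sdiff.1 hiu).2 (Finpartition.le _ h hiu)]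
    rw [← mul_sum, ih u hus]
    split_ifs <;> simp
  rw [Finpartition.sum_eq_sum_powerset_erase hi fun T => ∏ Q ∈ T, (mobiusWeight Q : R),
    sum_congr rfl sum_insert_block, sum_powerset_ite_card_le_one, sdiff_empty]
  simp_rw [sdiff_singleton_eq_erase]
  obtain ⟨k, hk⟩ : ∃ k, #s = k + 1 :=
    ⟨#s - 1, (Nat.sub_add_cancel (card_pos.2 ⟨i, hi⟩)).symm⟩
  have weight_erase (j) (hj : j ∈ s.erase i) :
      (mobiusWeight (s.erase j) : R) = (-1) ^ (k - 1) * (k - 1).factorial := by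
    rw [mobiusWeight, card_erase_of_mem (mem_of_mem_erase hj), hk, Nat.add_sub_cancel]
  rw [sum_congr rfl weight_erase, sum_const, card_erase_of_mem hi, mobiusWeight, hk,
    Nat.add_sub_cancel, nsmul_eq_mul]
  rcases k with _ | k
  · simp
  · simp [Nat.factorial_succ, pow_succ]
    ring

def partitionSum (x : ι → K) (s : Finset ι) : K :=
  ∑ P : Finpartition s, ∏ Q ∈ P.parts, mobiusWeight Q * (∏ j ∈ Q, x j - 1)⁻¹

lemma prod_mul_partitionSum {x : ι → K} {s : Finset ι}
    (hx : ∀ Q ⊆ s, Q.Nonempty → ∏ j ∈ Q, x j ≠ 1) :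
    (∏ j ∈ s, x j) * partitionSum x s =
      partitionSum x s + ∑ i ∈ s, partitionSum x (s.erase i) := by
  have split_parts (P : Finpartition s) :
      (∏ j ∈ s, x j) * ∏ Q ∈ P.parts, mobiusWeight Q * (∏ j ∈ Q, x j - 1)⁻¹ =
        ∏ Q ∈ P.parts, (mobiusWeight Q + mobiusWeight Q * (∏ j ∈ Q, x j - 1)⁻¹) := by
    rw [← P.prod_prod_parts, ← prod_mul_distrib]
    refine prod_congr rfl fun Q hQ => ?_
    have : ∏ j ∈ Q, x j - 1 ≠ 0 := sub_ne_zero.2 (hx Q (P.le hQ) (P.nonempty_of_mem_parts hQ))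
    field_simp
    ring
  rw [partitionSum, mul_sum, sum_congr rfl fun P _ => split_parts P, Finpartition.sum_prod_add]
  simp_rw [sum_prod_mobiusWeight, ite_mul, one_mul, zero_mul]
  refine (sum_powerset_ite_card_le_one s fun u => partitionSum x (s \ u)).trans ?_
  simp only [sdiff_empty, sdiff_singleton_eq_erase]
  rfl

lemma sum_orderings_tailsTerm {x : ι → K} {s : Finset ι}
    (hx : ∀ Q ⊆ s, Q.Nonempty → ∏ j ∈ Q, x j ≠ 1) :
    ∑ l ∈ orderings s, tailsTerm x l = partitionSum x s := by
  induction s using Finset.strongInduction with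
  | H s ih =>
  obtain rfl | hs := s.eq_empty_or_nonempty
  · rw [orderings_empty, sum_singleton, partitionSum,
      Finpartition.sum_empty fun T => ∏ Q ∈ T, mobiusWeight Q * (∏ j ∈ Q, x j - 1)⁻¹]
    rfl
  have first_step (i) (hi : i ∈ s) :
      ∑ t ∈ orderings (s.erase i), tailsTerm x (i :: t) =
        (∏ j ∈ s, x j - 1)⁻¹ * partitionSum x (s.erase i) := by
    calc ∑ t ∈ orderings (s.erase i), tailsTerm x (i :: t)
        = ∑ t ∈ orderings (s.erase i), (∏ j ∈ s, x j - 1)⁻¹ * tailsTerm x t :=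
          sum_congr rfl fun t ht => by
            rw [tailsTerm, prod_map_of_mem_orderings (cons_mem_orderings.2 ⟨hi, ht⟩)]
      _ = (∏ j ∈ s, x j - 1)⁻¹ * partitionSum x (s.erase i) := by
          rw [← mul_sum, ih _ (erase_ssubset hi) fun Q hQ => hx Q (hQ.trans (erase_subset _ _))]
  rw [sum_orderings_eq_sum_sum_cons hs, sum_congr rfl first_step, ← mul_sum,
    inv_mul_eq_iff_eq_mul₀ (sub_ne_zero.2 (hx s subset_rfl hs)), sub_one_mul,
    prod_mul_partitionSum hx, add_sub_cancel_left]

end HoffmanIdentity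

theorem stmt15_general (n : ℕ) (x : Fin n → ℝ) (hx : ∀ j, 1 < x j) :
    ∑ σ : Equiv.Perm (Fin n), ∏ k : Fin n, ((∏ j ∈ Finset.Iic k, x (σ j)) - 1)⁻¹ =
      ∑ P : Finpartition (Finset.univ : Finset (Fin n)),
        (-1 : ℝ) ^ (n - P.parts.card) *
          ∏ Q ∈ P.parts, ((Q.card - 1).factorial : ℝ) * ((∏ j ∈ Q, x j) - 1)⁻¹ := by
  have prod_ne_one (Q : Finset (Fin n)) (_ : Q ⊆ univ) (hQ : Q.Nonempty) :
      ∏ j ∈ Q, x j ≠ 1 := by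
    simpa using (prod_lt_prod_of_nonempty (fun _ _ => one_pos) (fun j _ => hx j) hQ).ne'
  simp_rw [prod_Iic_eq_tailsTerm_reverse]
  rw [sum_perm_ofFn_eq_sum_orderings fun l => tailsTerm x l.reverse, sum_orderings_reverse,
    sum_orderings_tailsTerm prod_ne_one, partitionSum]
  refine sum_congr rfl fun P _ => ?_
  simp_rw [mobiusWeight, mul_assoc]
  rw [prod_mul_distrib, prod_pow_eq_pow_sum, P.sum_card_sub_one, card_univ, Fintype.card_fin]

/-- The rational function identity equivalent to Hoffman's partition identity. -/
theorem stmt15 (n : ℕ) (hn : 0 < n) (x : Fin n → ℝ) (hx : ∀ j, 1 < x j) :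
    ∑ σ : Equiv.Perm (Fin n), ∏ k : Fin n, ((∏ j ∈ Finset.Iic k, x (σ j)) - 1)⁻¹ =
      ∑ P : Finpartition (Finset.univ : Finset (Fin n)),
        (-1 : ℝ) ^ (n - P.parts.card) *
          ∏ Q ∈ P.parts, ((Q.card - 1).factorial : ℝ) * ((∏ j ∈ Q, x j) - 1)⁻¹ :=
  stmt15_general n x hx
end

section
/- Fix a positive integer N, a positive integer n, and functions f_1, ..., f_n from the positive integers to ℂ. Then ∑_{σ ∈ S_n} z_N(f_{σ(1)}, f_{σ(2)}, ..., f_{σ(n)}) = ∑_{𝒫 ⊢ {1,...,n}} (−1)^{n − |𝒫|} ∏_{P ∈ 𝒫} (|P| − 1)! z_N(∑_{j ∈ P} f_j), where S_n is the group of permutations of {1, ..., n}, the sum on the right is over all unordered set partitions 𝒫 of {1, ..., n}, |𝒫| is the number of parts of 𝒫, and ∑_{j ∈ P} f_j is the pointwise sum. -/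
/-- `zN N (f₁,…,fₙ) = ∑_{N > k₁ > k₂ > ⋯ > kₙ > 0} ∏ⱼ exp (fⱼ kⱼ)`, a finite nested sum. -/
noncomputable def zN (N : ℕ) {n : ℕ} (f : Fin n → ℕ+ → ℂ) : ℂ :=
  ∑ k ∈ Finset.univ.filter (fun k : Fin n → Fin N =>
      (∀ i j : Fin n, i < j → (k j : ℕ) < (k i : ℕ)) ∧ ∀ i, 0 < (k i : ℕ)),
    ∏ j, Complex.exp (if h : 0 < (k j : ℕ) then f j ⟨(k j : ℕ), h⟩ else 0)

/-!
Sorting identifies pairs (permutation `σ`, strictly decreasing tuple) with injective tuples, so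
the left-hand side is the sum of `∏ⱼ exp (fⱼ kⱼ)` over injective tuples `k` of positive indices.
Expanding each `zN N ![∑_{j ∈ Q} fⱼ]` into a single sum, the right-hand side is the sum of the same
terms over all positive tuples `k`, each weighted by `∑ ∏_{Q ∈ P} (-1)^(|Q|-1) (|Q|-1)!` over the
partitions `P` on whose blocks `k` is constant. By Möbius inversion in the partition lattice this
weight is `1` if `k` is injective and `0` otherwise; here it is proved by induction, splitting off
the block that contains a fixed point.
-/

open Finset

theorem Tuple.existsUnique_perm_strictAnti {n : ℕ} {α : Type*} [LinearOrder α] {t : Fin n → α}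
    (ht : Function.Injective t) : ∃! σ : Equiv.Perm (Fin n), StrictAnti (t ∘ σ) := by
  have hanti : ∀ σ : Equiv.Perm (Fin n), StrictAnti (t ∘ σ) ↔ Monotone (OrderDual.toDual ∘ t ∘ σ) :=
    fun σ => ⟨fun h => monotone_toDual_comp_iff.2 h.antitone,
      fun h => (monotone_toDual_comp_iff.1 h).strictAnti_of_injective (ht.comp σ.injective)⟩
  refine ⟨Tuple.sort (OrderDual.toDual ∘ t), (hanti _).2 (Tuple.monotone_sort _), ?_⟩
  intro τ hτ
  have h := Tuple.unique_monotone ((hanti τ).1 hτ) (Tuple.monotone_sort (OrderDual.toDual ∘ t))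
  exact Equiv.ext fun i => ht (congrFun h i)

namespace Finpartition

variable {α : Type*} [DecidableEq α]

lemma parts_avoid_of_mem {s b : Finset α} (P : Finpartition s) (hb : b ∈ P.parts) :
    (P.avoid b).parts = P.parts.erase b := by
  ext c
  rw [mem_avoid, mem_erase]
  constructor
  · rintro ⟨d, hd, hdb, rfl⟩
    have hne : d ≠ b := fun h => hdb h.le
    have hdis : Disjoint d b := P.disjoint hd hb hne
    rw [hdis.sdiff_eq_left]
    exact ⟨hne, hd⟩
  · rintro ⟨hcb, hc⟩
    have hdis : Disjoint c b := P.disjoint hc hb hcb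
    exact ⟨c, hc, fun h => P.ne_bot hc (hdis.eq_bot_of_le h), hdis.sdiff_eq_left⟩

lemma sum_prod_parts_eq_sum_part_mem {R : Type*} [CommSemiring R] (g : Finset α → R)
    {s : Finset α} {a : α} (ha : a ∈ s) :
    ∑ P : Finpartition s, ∏ Q ∈ P.parts, g Q =
      ∑ Q ∈ s.powerset with a ∈ Q, g Q * ∑ P : Finpartition (s \ Q), ∏ B ∈ P.parts, g B := by
  rw [← sum_fiberwise_of_maps_to (g := fun P : Finpartition s => P.part a)
    (t := s.powerset.filter (a ∈ ·)) fun P _ => by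
      simpa using And.intro (P.part_subset a) (P.mem_part_self.2 ha)]
  refine sum_congr rfl fun Q hQ => ?_
  rw [mem_filter, mem_powerset] at hQ
  have hQne : Q ≠ ⊥ := ne_empty_of_mem hQ.2
  have hQ_notMem (P : Finpartition (s \ Q)) : Q ∉ P.parts := fun h => by
    simpa [hQ.2] using P.le h hQ.2
  have hQ_mem {P : Finpartition s} (hP : P ∈ univ.filter (·.part a = Q)) : Q ∈ P.parts := by
    rw [← (mem_filter.1 hP).2]
    exact P.part_mem.2 ha
  rw [mul_sum]
  refine sum_nbij' (·.avoid Q) (·.extend hQne sdiff_disjoint (sdiff_sup_cancel hQ.1))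
    (fun _ _ => mem_univ _) (fun P _ => ?_) (fun P hP => ?_) (fun P _ => ?_) (fun P hP => ?_)
  · rw [mem_filter]
    exact ⟨mem_univ _, part_eq_of_mem _ (by simp [extend_parts]) hQ.2⟩
  · ext1
    rw [extend_parts, parts_avoid_of_mem P (hQ_mem hP), insert_erase (hQ_mem hP)]
  · ext1
    rw [parts_avoid_of_mem _ (by simp [extend_parts]), extend_parts, erase_insert (hQ_notMem P)]
  · rw [parts_avoid_of_mem P (hQ_mem hP), mul_prod_erase _ _ (hQ_mem hP)]

lemma prod_parts_sum_prod_eq_sum_filter {ι β R : Type*} [Fintype ι] [DecidableEq ι]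
    [DecidableEq β] [CommSemiring R] (P : Finpartition (univ : Finset ι)) (A : Finset β)
    (e : ι → β → R) :
    ∏ Q ∈ P.parts, ∑ m ∈ A, ∏ j ∈ Q, e j m =
      ∑ k ∈ (Fintype.piFinset fun _ => A).filter
          (fun k => ∀ Q ∈ P.parts, ∀ i ∈ Q, ∀ j ∈ Q, k i = k j),
        ∏ j, e j (k j) := by
  let part (j : ι) : P.parts := ⟨P.part j, P.part_mem.2 (mem_univ j)⟩
  have hpart {Q : P.parts} {j : ι} (hj : j ∈ Q.1) : part j = Q :=
    Subtype.ext (P.part_eq_of_mem Q.2 hj)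
  have hprod (x : P.parts → β) : ∏ Q : P.parts, ∏ j ∈ Q.1, e j (x Q) = ∏ j, e j (x (part j)) := by
    have hunion :=
      prod_biUnion (s := P.parts) (t := id) (f := fun j => e j (x (part j))) P.disjoint
    rw [P.biUnion_parts] at hunion
    rw [hunion, ← prod_coe_sort P.parts fun Q => ∏ j ∈ id Q, e j (x (part j))]
    exact prod_congr rfl fun Q _ => prod_congr rfl fun j hj => by rw [hpart hj]
  rw [← prod_coe_sort, prod_univ_sum]
  refine sum_nbij' (fun x j => x (part j)) (fun k Q => k (P.nonempty_of_mem_parts Q.2).choose)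
    (fun x hx => ?_) (fun k hk => ?_) (fun x _ => ?_) (fun k hk => ?_) (fun x _ => hprod x)
  · simp only [mem_filter, Fintype.mem_piFinset] at hx ⊢
    exact ⟨fun j => hx _, fun Q hQ i hi j hj => by
      rw [hpart (Q := ⟨Q, hQ⟩) hi, hpart (Q := ⟨Q, hQ⟩) hj]⟩
  · simp only [mem_filter, Fintype.mem_piFinset] at hk ⊢
    exact fun Q => hk.1 _
  · funext Q
    exact congrArg x (hpart (P.nonempty_of_mem_parts Q.2).choose_spec)
  · simp only [mem_filter] at hk
    funext j
    have hj := P.part_mem.2 (mem_univ j)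
    exact hk.2 _ hj _ (P.nonempty_of_mem_parts hj).choose_spec j (P.mem_part_self.2 (mem_univ j))

end Finpartition

section PartitionMobius

open Nat

/-- `(-1) ^ (m - 1) * (m - 1)!` is the Möbius number `μ(0̂, 1̂)` of the lattice of partitions of
an `m`-element set. -/
def partitionMobius (R : Type*) [CommRing R] (m : ℕ) : R := (-1) ^ (m - 1) * (m - 1)!

variable {R : Type*} [CommRing R] {α β : Type*} [DecidableEq α] [DecidableEq β]

lemma prod_partitionMobius {s : Finset α} (P : Finpartition s) :
    ∏ Q ∈ P.parts, partitionMobius R #Q =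
      (-1) ^ (#s - #P.parts) * ∏ Q ∈ P.parts, ((#Q - 1)! : R) := by
  have hexp : ∑ Q ∈ P.parts, (#Q - 1) = #s - #P.parts := by
    rw [sum_tsub_distrib _ fun Q hQ => (P.nonempty_of_mem_parts hQ).card_pos, P.sum_card_parts,
      ← card_eq_sum_ones]
  simp only [partitionMobius, prod_mul_distrib, prod_pow_eq_pow_sum, hexp]

lemma sum_partitionMobius_sdiff_card_le_one {F : Finset α} {a : α} (ha : a ∈ F) :
    ∑ Q ∈ F.powerset with a ∈ Q, (if #(F \ Q) ≤ 1 then partitionMobius R #Q else 0) =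
      if #F ≤ 1 then 1 else 0 := by
  have hcompl : ∑ Q ∈ F.powerset with a ∈ Q, (if #(F \ Q) ≤ 1 then partitionMobius R #Q else 0) =
      ∑ D ∈ (F.erase a).powerset, (if #D ≤ 1 then partitionMobius R (#F - #D) else 0) := by
    refine sum_nbij' (F \ ·) (F \ ·) (fun Q hQ => ?_) (fun D hD => ?_) (fun Q hQ => ?_)
      (fun D hD => ?_) (fun Q hQ => ?_)
    · simp only [mem_filter, mem_powerset] at hQ ⊢
      exact fun x hx => mem_erase.2 ⟨fun h => (mem_sdiff.1 hx).2 (h ▸ hQ.2), (mem_sdiff.1 hx).1⟩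
    · rw [mem_powerset] at hD
      simp only [mem_filter, mem_powerset]
      exact ⟨sdiff_subset, mem_sdiff.2 ⟨ha, fun h => (mem_erase.1 (hD h)).1 rfl⟩⟩
    · simp only [mem_filter, mem_powerset] at hQ
      exact Finset.sdiff_sdiff_eq_self hQ.1
    · rw [mem_powerset] at hD
      exact Finset.sdiff_sdiff_eq_self (hD.trans (erase_subset a F))
    · simp only [mem_filter, mem_powerset] at hQ
      rw [card_sdiff_of_subset hQ.1, Nat.sub_sub_self (card_le_card hQ.1)]
  obtain ⟨m, hm⟩ : ∃ m, #F = m + 1 := ⟨_, (card_erase_add_one ha).symm⟩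
  rw [hcompl, sum_powerset_apply_card (fun j => if j ≤ 1 then partitionMobius R (#F - j) else 0),
    card_erase_of_mem ha, hm, Nat.add_sub_cancel]
  rcases m with _ | p
  · simp [partitionMobius]
  · rw [sum_range_succ', sum_range_succ', sum_eq_zero fun j _ => by simp]
    simp [partitionMobius, pow_succ, Nat.factorial_succ]
    ring

lemma injOn_sdiff_iff_of_subset_fiber (k : α → β) {s Q : Finset α} {a : α}
    (hQ : Q ⊆ s.filter (k · = k a)) :
    Set.InjOn k ↑(s \ Q) ↔
      Set.InjOn k ↑(s \ s.filter (k · = k a)) ∧ #(s.filter (k · = k a) \ Q) ≤ 1 := by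
  set F := s.filter (k · = k a)
  have hsplit : (↑(s \ Q) : Set α) = ↑(s \ F) ∪ ↑(F \ Q) := by
    rw [← coe_union, sdiff_union_sdiff_cancel (filter_subset _ s) hQ]
  have hdisj : Disjoint (↑(s \ F) : Set α) ↑(F \ Q) :=
    disjoint_coe.2 (disjoint_sdiff_self_left.mono_right sdiff_subset)
  have hvalue {x : α} (hx : x ∈ F \ Q) : k x = k a := (mem_filter.1 (mem_sdiff.1 hx).1).2
  rw [hsplit, Set.injOn_union hdisj, card_le_one]
  refine and_congr_right fun _ => ⟨fun ⟨h, _⟩ x hx y hy => ?_, fun h => ⟨?_, ?_⟩⟩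
  · exact h hx hy ((hvalue hx).trans (hvalue hy).symm)
  · exact fun x hx y hy _ => h x hx y hy
  · intro x hx y hy hxy
    simp only [mem_coe, mem_sdiff, mem_filter, F, not_and] at hx
    exact hx.2 hx.1 (hxy.trans (hvalue hy))

theorem sum_finpartition_prod_ite_partitionMobius (k : α → β) (s : Finset α) :
    ∑ P : Finpartition s, ∏ Q ∈ P.parts,
        (if ∀ i ∈ Q, ∀ j ∈ Q, k i = k j then partitionMobius R #Q else 0) =
      if Set.InjOn k s then 1 else 0 := by
  induction s using Finset.strongInduction with | H s ih => ?_
  rcases s.eq_empty_or_nonempty with rfl | ⟨a, ha⟩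
  · have : Unique (Finpartition (∅ : Finset α)) :=
      inferInstanceAs (Unique (Finpartition (⊥ : Finset α)))
    rw [Fintype.sum_unique, Finpartition.parts_eq_empty_iff.2 rfl]
    simp
  set F := s.filter (k · = k a)
  have hconst {Q : Finset α} (hQs : Q ⊆ s) (haQ : a ∈ Q) :
      (∀ i ∈ Q, ∀ j ∈ Q, k i = k j) ↔ Q ⊆ F :=
    ⟨fun h x hx => mem_filter.2 ⟨hQs hx, h x hx a haQ⟩,
      fun h i hi j hj => (mem_filter.1 (h hi)).2.trans (mem_filter.1 (h hj)).2.symm⟩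
  -- The block `Q ∋ a` must lie in the fiber `F` of `k a`; by induction, the partitions of `s \ Q`
  -- then contribute exactly when `k` is injective off `F` and `Q` misses at most one point of `F`.
  calc _ = ∑ Q ∈ s.powerset with a ∈ Q,
        if Q ⊆ F then partitionMobius R #Q * (if Set.InjOn k ↑(s \ Q) then 1 else 0) else 0 := by
        rw [Finpartition.sum_prod_parts_eq_sum_part_mem _ ha]
        refine sum_congr rfl fun Q hQ => ?_
        rw [mem_filter, mem_powerset] at hQ
        rw [ih _ (sdiff_ssubset hQ.1 ⟨a, hQ.2⟩), if_congr (hconst hQ.1 hQ.2) rfl rfl, ite_mul,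
          zero_mul]
    _ = ∑ Q ∈ F.powerset with a ∈ Q, (if Set.InjOn k ↑(s \ F) then 1 else 0) *
        (if #(F \ Q) ≤ 1 then partitionMobius R #Q else 0) := by
        have hindex : (s.powerset.filter (a ∈ ·)).filter (· ⊆ F) = F.powerset.filter (a ∈ ·) := by
          ext Q
          simp only [mem_filter, mem_powerset]
          exact ⟨fun h => ⟨h.2, h.1.2⟩, fun h => ⟨⟨h.1.trans (filter_subset _ _), h.2⟩, h.1⟩⟩
        rw [← sum_filter, hindex]
        refine sum_congr rfl fun Q hQ => ?_
        rw [mem_filter, mem_powerset] at hQ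
        rw [if_congr (injOn_sdiff_iff_of_subset_fiber k hQ.1) rfl rfl, ite_zero_mul_ite_zero,
          one_mul, mul_ite, mul_one, mul_zero]
    _ = if Set.InjOn k ↑s then 1 else 0 := by
        have hs := injOn_sdiff_iff_of_subset_fiber k (s := s) (a := a) (empty_subset _)
        rw [sdiff_empty, sdiff_empty] at hs
        rw [← mul_sum, sum_partitionMobius_sdiff_card_le_one (by simpa [F] using ha),
          ite_zero_mul_ite_zero, mul_one]
        exact if_congr hs.symm rfl rfl

end PartitionMobius

namespace zN

variable {N n : ℕ}

noncomputable def expAt (g : ℕ+ → ℂ) (m : Fin N) : ℂ :=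
  Complex.exp (if h : 0 < (m : ℕ) then g ⟨m, h⟩ else 0)

lemma eq_sum_strictAnti (f : Fin n → ℕ+ → ℂ) :
    zN N f = ∑ k ∈ univ.filter (fun k : Fin n → Fin N => StrictAnti k ∧ ∀ i, 0 < (k i : ℕ)),
      ∏ j, expAt (f j) (k j) := rfl

lemma sum_perm_eq_sum_injective (f : Fin n → ℕ+ → ℂ) :
    ∑ σ : Equiv.Perm (Fin n), zN N (fun k => f (σ k)) =
      ∑ t ∈ (Fintype.piFinset fun _ => univ.filter fun m : Fin N => 0 < (m : ℕ)).filter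
          Function.Injective, ∏ j, expAt (f j) (t j) := by
  simp only [eq_sum_strictAnti, ← sum_product']
  refine sum_nbij (fun p => p.2 ∘ p.1.symm) ?_ ?_ ?_ ?_
  · rintro ⟨σ, k⟩ hk
    simp only [mem_product, mem_filter, mem_univ, true_and, Fintype.mem_piFinset] at hk ⊢
    exact ⟨fun i => hk.2 _, hk.1.injective.comp σ.symm.injective⟩
  · rintro ⟨σ, k⟩ hk ⟨τ, l⟩ hl (h : k ∘ σ.symm = l ∘ τ.symm)
    simp only [mem_coe, mem_product, mem_filter, mem_univ, true_and] at hk hl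
    have hστ : σ = τ :=
      (Tuple.existsUnique_perm_strictAnti (hk.1.injective.comp σ.symm.injective)).unique
        (by simpa [Function.comp_def] using hk.1) (by simpa [h, Function.comp_def] using hl.1)
    subst hστ
    simpa [Function.comp_def] using congrArg (· ∘ σ) h
  · intro t ht
    replace ht : (∀ i, 0 < (t i : ℕ)) ∧ Function.Injective t := by simpa using ht
    obtain ⟨σ, hσ, -⟩ := Tuple.existsUnique_perm_strictAnti ht.2
    refine ⟨(σ, t ∘ σ), ?_, by simp [Function.comp_def]⟩
    simpa using ⟨hσ, fun i => ht.1 _⟩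
  · rintro ⟨σ, k⟩ -
    simpa using Equiv.prod_comp σ (fun j => expAt (f j) (k (σ.symm j)))

lemma singleton_eq (g : ℕ+ → ℂ) :
    zN N ![g] = ∑ m ∈ univ.filter (fun m : Fin N => 0 < (m : ℕ)), expAt g m := by
  rw [eq_sum_strictAnti, sum_filter, sum_filter]
  exact Fintype.sum_equiv (Equiv.funUnique (Fin 1) (Fin N)) _ _ fun k => by
    simp [Subsingleton.strictAnti]

lemma expAt_sum (s : Finset (Fin n)) (f : Fin n → ℕ+ → ℂ) (m : Fin N) :
    expAt (fun x => ∑ j ∈ s, f j x) m = ∏ j ∈ s, expAt (f j) m := by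
  unfold expAt
  split_ifs <;> simp [Complex.exp_sum]

end zN

theorem stmt17_general (N : ℕ) (n : ℕ) (f : Fin n → ℕ+ → ℂ) :
    ∑ σ : Equiv.Perm (Fin n), zN N (fun k => f (σ k)) =
      ∑ P : Finpartition (Finset.univ : Finset (Fin n)),
        (-1 : ℂ) ^ (n - P.parts.card) *
          ∏ Q ∈ P.parts, ((Q.card - 1).factorial : ℂ) * zN N ![fun x => ∑ j ∈ Q, f j x] := by
  calc _ = ∑ k ∈ Fintype.piFinset fun _ => univ.filter fun m : Fin N => 0 < (m : ℕ),
        ∑ P : Finpartition (univ : Finset (Fin n)),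
          (∏ Q ∈ P.parts, if ∀ i ∈ Q, ∀ j ∈ Q, k i = k j then partitionMobius ℂ #Q else 0) *
            ∏ j, zN.expAt (f j) (k j) := by
        rw [zN.sum_perm_eq_sum_injective, sum_filter]
        refine sum_congr rfl fun k _ => ?_
        have h := sum_finpartition_prod_ite_partitionMobius (R := ℂ) k univ
        simp only [coe_univ, Set.injOn_univ] at h
        rw [← sum_mul]
        -- `convert` (and `congr!` below) reconciles the `Decidable` instances of `∀ i ∈ Q, …`,
        -- which are found differently for `Fin n` and for a general type
        convert (congrArg (· * ∏ j, zN.expAt (f j) (k j)) h).symm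
        simp
    _ = _ := by
        rw [sum_comm]
        refine sum_congr rfl fun P _ => ?_
        simp_rw [prod_ite_zero, ite_mul, zero_mul, ← sum_filter, ← mul_sum, prod_mul_distrib,
          zN.singleton_eq, zN.expAt_sum, P.prod_parts_sum_prod_eq_sum_filter, prod_partitionMobius,
          card_univ, Fintype.card_fin, mul_assoc]
        congr!

/-- Hoffman's partition identity for the finite stuffle-compatible sums `zN`. -/
theorem stmt17 (N : ℕ) (hN : 0 < N) (n : ℕ) (hn : 0 < n) (f : Fin n → ℕ+ → ℂ) :
    ∑ σ : Equiv.Perm (Fin n), zN N (fun k => f (σ k)) =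
      ∑ P : Finpartition (Finset.univ : Finset (Fin n)),
        (-1 : ℂ) ^ (n - P.parts.card) *
          ∏ Q ∈ P.parts, ((Q.card - 1).factorial : ℂ) * zN N ![fun x => ∑ j ∈ Q, f j x] :=
  stmt17_general N n f
end
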